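/- arXiv:1301.4874 — 2 statements merged into one kernel-verified Lean document; each statement's English description precedes it below -/
import Mathlib

section
/- Let A ⊆ ℤ^d be a VAS with a = ‖A‖∞, let α be a word of actions, let s be an integer with s ≥ 1 + ‖Δ(α)‖∞, and set x = (1+2a)·s. Let H be a reversible witness graph having at most x^{d^d} states, and let p, q be states of H with a path p →^α_H q. Then there exists a path p →^{α̃}_H q with Δ(α̃) = Δ(α) and |α̃| ≤ 2·x^{7·d^{d+2}}. -/
namespace VASRev

/-- Configurations with possibly projected (`⋆`) components: `⋆` is encoded by `none`. -/
abbrev PConf (d : ℕ) := Fin d → Option ℕ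

/-- `c ∈ ℕ_I^d` : exactly the components indexed by `I` are projected away. -/
def MemNI {d : ℕ} (I : Finset (Fin d)) (c : PConf d) : Prop :=
  ∀ i, c i = none ↔ i ∈ I

/-- Projection eliminating the components indexed by `L`. -/
def proj {d : ℕ} (L : Finset (Fin d)) (c : PConf d) : PConf d :=
  fun i => if i ∈ L then none else c i

/-- One step of the vector addition system by action `a`. -/
def Step {d : ℕ} (a : Fin d → ℤ) (x y : PConf d) : Prop :=
  ∀ i, (x i = none ∧ y i = none) ∨
    ∃ m n : ℕ, x i = some m ∧ y i = some n ∧ (n : ℤ) = (m : ℤ) + a i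

/-- A run from `x` to `y` labelled by a word of actions. -/
inductive Run {d : ℕ} : PConf d → List (Fin d → ℤ) → PConf d → Prop
  | nil (x : PConf d) : Run x [] x
  | cons {x y z : PConf d} {a : Fin d → ℤ} {σ : List (Fin d → ℤ)} :
      Step a x y → Run y σ z → Run x (a :: σ) z

/-- The displacement `Δ(σ)` of a word of actions. -/
def disp {d : ℕ} (σ : List (Fin d → ℤ)) : Fin d → ℤ :=
  fun i => (σ.map fun a => a i).sum

/-- `‖z‖∞` for `z : ℤ^d`. -/
def znorm {d : ℕ} (z : Fin d → ℤ) : ℕ :=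
  Finset.univ.sup fun i => (z i).natAbs

/-- `‖A‖∞` for a finite set of actions. -/
def Anorm {d : ℕ} (A : Finset (Fin d → ℤ)) : ℕ := A.sup znorm

/-- `‖c‖∞` for a configuration: maximum over the non-projected components. -/
def cnorm {d : ℕ} (c : PConf d) : ℕ :=
  Finset.univ.sup fun i => (c i).getD 0

/-- Transitions. -/
abbrev Trans (d : ℕ) := PConf d × (Fin d → ℤ) × PConf d

/-- Paths in a finite set of transitions. -/
inductive PathT {d : ℕ} (T : Finset (Trans d)) : PConf d → List (Trans d) → PConf d → Prop
  | nil (x : PConf d) : PathT T x [] x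
  | cons {x z : PConf d} {t : Trans d} {p : List (Trans d)} :
      t ∈ T → t.1 = x → PathT T t.2.2 p z → PathT T x (t :: p) z

/-- The label of a path. -/
def labels {d : ℕ} (p : List (Trans d)) : List (Fin d → ℤ) := p.map fun t => t.2.1

/-- A witness graph: a strongly connected subreachability graph with states in `ℕ_I^d`. -/
structure WitnessGraph (d : ℕ) (A : Finset (Fin d → ℤ)) (I : Finset (Fin d)) where
  Q : Finset (PConf d)
  T : Finset (Trans d)
  nonempty : Q.Nonempty
  states : ∀ q ∈ Q, MemNI I q
  trans : ∀ t ∈ T, t.1 ∈ Q ∧ t.2.1 ∈ A ∧ t.2.2 ∈ Q ∧ Step t.2.1 t.1 t.2.2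
  connected : ∀ x ∈ Q, ∀ y ∈ Q, ∃ p : List (Trans d), PathT T x p y

/-- A Kirchhoff function for a witness graph (functions `T → ℕ` are modelled as functions
on all transitions vanishing outside `T`). -/
def IsKirchhoff {d : ℕ} {A : Finset (Fin d → ℤ)} {I : Finset (Fin d)}
    (G : WitnessGraph d A I) (μ : Trans d → ℕ) : Prop :=
  (∀ t, t ∉ G.T → μ t = 0) ∧
  ∀ q : PConf d,
    ∑ t ∈ G.T.filter (fun t => t.2.2 = q), μ t =
    ∑ t ∈ G.T.filter (fun t => t.1 = q), μ t

/-- The displacement of a Kirchhoff function. -/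
def dispK {d : ℕ} {A : Finset (Fin d → ℤ)} {I : Finset (Fin d)}
    (G : WitnessGraph d A I) (μ : Trans d → ℕ) : Fin d → ℤ :=
  fun i => ∑ t ∈ G.T, (μ t : ℤ) * t.2.1 i

/-- `Z_G`: the submonoid of `(ℤ^d, +)` of finite sums of displacements of cycles of `G`. -/
def ZG {d : ℕ} {A : Finset (Fin d → ℤ)} {I : Finset (Fin d)}
    (G : WitnessGraph d A I) : AddSubmonoid (Fin d → ℤ) :=
  AddSubmonoid.closure {z | ∃ x ∈ G.Q, ∃ p, PathT G.T x p x ∧ disp (labels p) = z}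

/-- Reversibility of a witness graph. -/
def Reversible {d : ℕ} {A : Finset (Fin d → ℤ)} {I : Finset (Fin d)}
    (G : WitnessGraph d A I) : Prop :=
  ∀ x ∈ G.Q, ∀ (y : PConf d) (u : List (Trans d)), PathT G.T x u y →
    ∃ v : List (Trans d), PathT G.T y v x ∧ disp (labels u) + disp (labels v) = 0

end VASRev

open VASRev



namespace S16

variable {d : ℕ}

theorem labels_append (u v : List (Trans d)) : labels (u ++ v) = labels u ++ labels v := by
  simp [labels]

theorem disp_nil : disp ([] : List (Fin d → ℤ)) = 0 := by
  funext i; simp [disp]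

theorem disp_cons (a : Fin d → ℤ) (σ : List (Fin d → ℤ)) :
    disp (a :: σ) = a + disp σ := by
  funext i; simp [disp]

theorem disp_append (u v : List (Fin d → ℤ)) : disp (u ++ v) = disp u + disp v := by
  funext i; simp [disp]

theorem pathT_append {T : Finset (Trans d)} {x y z : PConf d} {u v : List (Trans d)}
    (h1 : PathT T x u y) (h2 : PathT T y v z) : PathT T x (u ++ v) z := by
  induction h1 with
  | nil => simpa using h2
  | cons ht hx _ ih => exact PathT.cons ht hx (ih h2)

/-- state after `i` steps -/
def stateAt : PConf d → List (Trans d) → ℕ → PConf d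
  | x, _, 0 => x
  | x, [], _ + 1 => x
  | _, t :: σ, i + 1 => stateAt t.2.2 σ i

@[simp] theorem stateAt_zero (x : PConf d) (σ : List (Trans d)) : stateAt x σ 0 = x := by
  cases σ <;> rfl

@[simp] theorem stateAt_nil (x : PConf d) (i : ℕ) : stateAt x [] i = x := by
  cases i <;> rfl

@[simp] theorem stateAt_cons (x : PConf d) (t : Trans d) (σ : List (Trans d)) (i : ℕ) :
    stateAt x (t :: σ) (i + 1) = stateAt t.2.2 σ i := rfl

theorem pathT_take {T : Finset (Trans d)} {x y : PConf d} {σ : List (Trans d)}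
    (h : PathT T x σ y) : ∀ i, PathT T x (σ.take i) (stateAt x σ i) := by
  induction h with
  | nil => intro i; simpa using PathT.nil _
  | cons ht hx _ ih =>
    intro i
    cases i with
    | zero => simpa using PathT.nil _
    | succ i => exact PathT.cons ht hx (ih i)

theorem pathT_drop {T : Finset (Trans d)} {x y : PConf d} {σ : List (Trans d)}
    (h : PathT T x σ y) : ∀ i, PathT T (stateAt x σ i) (σ.drop i) y := by
  induction h with
  | nil => intro i; simpa using PathT.nil _
  | cons ht hx hp ih =>
    intro i
    cases i with
    | zero => exact PathT.cons ht hx hp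
    | succ i => simpa using ih i

theorem stateAt_add (x : PConf d) (σ : List (Trans d)) (i k : ℕ) :
    stateAt x σ (i + k) = stateAt (stateAt x σ i) (σ.drop i) k := by
  induction σ generalizing x i with
  | nil => simp
  | cons t σ ih =>
    cases i with
    | zero => simp
    | succ i =>
      have : i + 1 + k = (i + k) + 1 := by omega
      rw [this]
      simpa using ih t.2.2 i

theorem take_middle_drop (σ : List (Trans d)) (i j : ℕ) (hij : i ≤ j) :
    σ.take i ++ (((σ.drop i).take (j - i)) ++ σ.drop j) = σ := by
  have h1 : σ.drop j = (σ.drop i).drop (j - i) := by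
    rw [List.drop_drop]; congr 1; omega
  rw [h1, List.take_append_drop, List.take_append_drop]

section Graph

variable {A : Finset (Fin d → ℤ)} {K : Finset (Fin d)} (H : WitnessGraph d A K)

theorem stateAt_mem {x y : PConf d} {σ : List (Trans d)}
    (h : PathT H.T x σ y) (hx : x ∈ H.Q) : ∀ i, stateAt x σ i ∈ H.Q := by
  induction h with
  | nil => intro i; simpa using hx
  | cons ht _ _ ih =>
    intro i
    cases i with
    | zero => simpa using hx
    | succ i => exact ih ((H.trans _ ht).2.2.1) i

theorem exists_repeat {x y : PConf d} {σ : List (Trans d)}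
    (h : PathT H.T x σ y) (hx : x ∈ H.Q) (hl : H.Q.card ≤ σ.length) :
    ∃ i j, i < j ∧ j ≤ H.Q.card ∧ stateAt x σ i = stateAt x σ j := by
  have hmaps : ∀ k ∈ (Finset.univ : Finset (Fin (H.Q.card + 1))),
      (fun k : Fin (H.Q.card + 1) => stateAt x σ (k : ℕ)) k ∈ H.Q := by
    intro k _; exact stateAt_mem H h hx _
  obtain ⟨u, _, w, _, huw, he⟩ :=
    Finset.exists_ne_map_eq_of_card_lt_of_maps_to
      (f := fun k : Fin (H.Q.card + 1) => stateAt x σ (k : ℕ))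
      (by simpa using Nat.lt_succ_self H.Q.card) hmaps
  rcases lt_or_gt_of_ne huw with hlt | hgt
  · exact ⟨u, w, hlt, Nat.lt_succ_iff.mp w.isLt, he⟩
  · exact ⟨w, u, hgt, Nat.lt_succ_iff.mp u.isLt, he.symm⟩

theorem short_path : ∀ (n : ℕ) {x y : PConf d} {σ : List (Trans d)}, σ.length ≤ n →
    x ∈ H.Q → PathT H.T x σ y →
    ∃ σ', PathT H.T x σ' y ∧ σ'.length < H.Q.card := by
  intro n
  induction n with
  | zero =>
    intro x y σ hlen hx h
    have : σ = [] := List.length_eq_zero_iff.mp (Nat.le_zero.mp hlen)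
    subst this
    exact ⟨[], h, Finset.card_pos.mpr H.nonempty⟩
  | succ n ih =>
    intro x y σ hlen hx h
    by_cases hc : σ.length < H.Q.card
    · exact ⟨σ, h, hc⟩
    · push_neg at hc
      obtain ⟨i, j, hij, hjc, hst⟩ := exists_repeat H h hx hc
      have hjlen : j ≤ σ.length := le_trans hjc hc
      have hp1 : PathT H.T x (σ.take i) (stateAt x σ i) := pathT_take h i
      have hp2 : PathT H.T (stateAt x σ i) (σ.drop j) y := hst ▸ pathT_drop h j
      have hp : PathT H.T x (σ.take i ++ σ.drop j) y := pathT_append hp1 hp2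
      have hlen' : (σ.take i ++ σ.drop j).length ≤ n := by
        simp only [List.length_append, List.length_take, List.length_drop]
        omega
      exact ih hlen' hx hp

/-- displacements of short cycles -/
def CycD : Set (Fin d → ℤ) :=
  {v | ∃ y ∈ H.Q, ∃ c, PathT H.T y c y ∧ 1 ≤ c.length ∧ c.length ≤ H.Q.card ∧
    disp (labels c) = v}

theorem decomp : ∀ (n : ℕ) {y : PConf d} {σ : List (Trans d)}, σ.length ≤ n →
    y ∈ H.Q → PathT H.T y σ y →
    ∃ l : List (Fin d → ℤ), (∀ v ∈ l, v ∈ CycD H) ∧ l.sum = disp (labels σ) := by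
  intro n
  induction n with
  | zero =>
    intro y σ hlen hy h
    have : σ = [] := List.length_eq_zero_iff.mp (Nat.le_zero.mp hlen)
    subst this
    exact ⟨[], by simp, by simp [labels, disp_nil]⟩
  | succ n ih =>
    intro y σ hlen hy h
    by_cases hc : σ.length ≤ H.Q.card
    · rcases List.eq_nil_or_concat σ with rfl | hne
      · exact ⟨[], by simp, by simp [labels, disp_nil]⟩
      · have hne' : 1 ≤ σ.length := by
          rcases hne with ⟨l', a', rfl⟩; simp
        exact ⟨[disp (labels σ)], by
          intro v hv
          simp only [List.mem_singleton] at hv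
          exact hv ▸ ⟨y, hy, σ, h, hne', hc, rfl⟩, by simp⟩
    · push_neg at hc
      obtain ⟨i, j, hij, hjc, hst⟩ := exists_repeat H h hy (le_of_lt hc)
      have hjlen : j ≤ σ.length := le_trans hjc (le_of_lt hc)
      -- middle cycle
      set z := stateAt y σ i with hz
      have hzQ : z ∈ H.Q := stateAt_mem H h hy i
      have hdrop : PathT H.T z (σ.drop i) y := pathT_drop h i
      have hmid0 : PathT H.T z ((σ.drop i).take (j - i)) (stateAt z (σ.drop i) (j - i)) :=
        pathT_take hdrop (j - i)
      have hmidend : stateAt z (σ.drop i) (j - i) = z := by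
        rw [hz, ← stateAt_add]
        have : i + (j - i) = j := by omega
        rw [this, ← hst]
      have hmid : PathT H.T z ((σ.drop i).take (j - i)) z := by
        rw [hmidend] at hmid0; exact hmid0
      have hmidlen : ((σ.drop i).take (j - i)).length = j - i := by
        simp only [List.length_take, List.length_drop]
        omega
      -- the rest
      have hp1 : PathT H.T y (σ.take i) z := pathT_take h i
      have hp2 : PathT H.T z (σ.drop j) y := hst ▸ pathT_drop h j
      have hp : PathT H.T y (σ.take i ++ σ.drop j) y := pathT_append hp1 hp2
      have hlen' : (σ.take i ++ σ.drop j).length ≤ n := by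
        simp only [List.length_append, List.length_take, List.length_drop]
        omega
      obtain ⟨l, hl, hsum⟩ := ih hlen' hy hp
      refine ⟨disp (labels ((σ.drop i).take (j - i))) :: l, ?_, ?_⟩
      · intro v hv
        rcases List.mem_cons.mp hv with rfl | hv'
        · exact ⟨z, hzQ, _, hmid, by omega, by omega, rfl⟩
        · exact hl v hv'
      · have hdecomp : σ = σ.take i ++ (((σ.drop i).take (j - i)) ++ σ.drop j) :=
          (take_middle_drop σ i j (le_of_lt hij)).symm
        rw [List.sum_cons, hsum]
        conv_rhs => rw [hdecomp]
        simp only [labels_append, disp_append]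
        abel

end Graph

end S16

namespace S16

variable {d : ℕ}

theorem natAbs_le_znorm (z : Fin d → ℤ) (i : Fin d) : (z i).natAbs ≤ znorm z := by
  simpa [znorm] using Finset.le_sup (f := fun j => (z j).natAbs) (Finset.mem_univ i)

theorem znorm_le {z : Fin d → ℤ} {B : ℕ} (h : ∀ i, (z i).natAbs ≤ B) : znorm z ≤ B := by
  simp only [znorm]
  exact Finset.sup_le fun i _ => h i

section Graph

variable {A : Finset (Fin d → ℤ)} {K : Finset (Fin d)} (H : WitnessGraph d A K)

theorem labels_mem {x y : PConf d} {σ : List (Trans d)}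
    (h : PathT H.T x σ y) : ∀ a ∈ labels σ, a ∈ A := by
  induction h with
  | nil => simp [labels]
  | cons ht _ _ ih =>
    intro a ha
    simp only [labels, List.map_cons, List.mem_cons] at ha
    rcases ha with rfl | ha
    · exact (H.trans _ ht).2.1
    · exact ih a ha

theorem natAbs_disp_le {M : ℕ} : ∀ (σ : List (Fin d → ℤ)), (∀ a ∈ σ, ∀ i, (a i).natAbs ≤ M) →
    ∀ i, ((disp σ) i).natAbs ≤ M * σ.length := by
  intro σ
  induction σ with
  | nil => intro _ i; simp [disp]
  | cons a σ ih =>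
    intro hmem i
    have h1 : ((disp (a :: σ)) i) = a i + (disp σ) i := by simp [disp]
    have h2 : (a i + (disp σ) i).natAbs ≤ (a i).natAbs + ((disp σ) i).natAbs :=
      Int.natAbs_add_le _ _
    have h3 : (a i).natAbs ≤ M := hmem a (by simp) i
    have h4 : ((disp σ) i).natAbs ≤ M * σ.length :=
      ih (fun b hb => hmem b (by simp [hb])) i
    rw [h1]
    calc (a i + (disp σ) i).natAbs ≤ (a i).natAbs + ((disp σ) i).natAbs := h2
      _ ≤ M + M * σ.length := Nat.add_le_add h3 h4
      _ = M * (σ.length + 1) := by ring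
      _ = M * (a :: σ).length := by simp

theorem disp_path_bound {x y : PConf d} {σ : List (Trans d)}
    (h : PathT H.T x σ y) (i : Fin d) :
    ((disp (labels σ)) i).natAbs ≤ Anorm A * σ.length := by
  have hlen : (labels σ).length = σ.length := by simp [labels]
  have hA : ∀ a ∈ labels σ, znorm a ≤ Anorm A := by
    intro a ha
    simpa [Anorm] using Finset.le_sup (f := znorm) (labels_mem H h a ha)
  have := natAbs_disp_le (labels σ)
    (fun a ha j => le_trans (natAbs_le_znorm a j) (hA a ha)) i
  rw [hlen] at this
  exact this

theorem cyc_pow {y : PConf d} {c : List (Trans d)} (h : PathT H.T y c y) :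
    ∀ k : ℕ, ∃ ck, PathT H.T y ck y ∧ disp (labels ck) = k • disp (labels c) ∧
      ck.length = k * c.length := by
  intro k
  induction k with
  | zero => exact ⟨[], PathT.nil _, by simp [labels, disp_nil], by simp⟩
  | succ k ih =>
    obtain ⟨ck, h1, h2, h3⟩ := ih
    refine ⟨c ++ ck, pathT_append h h1, ?_, by simp [h3]; ring⟩
    rw [labels_append, disp_append, h2, succ_nsmul]
    abel

theorem tour {p : PConf d} (hp : p ∈ H.Q)
    (tl : List ((Fin d → ℤ) × PConf d × List (Trans d)))
    (htl : ∀ e ∈ tl, e.2.1 ∈ H.Q ∧ PathT H.T e.2.1 e.2.2 e.2.1 ∧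
      e.2.2.length ≤ H.Q.card ∧ disp (labels e.2.2) = e.1) :
    ∃ δ : Fin d → ℤ, ∀ k : ((Fin d → ℤ) × PConf d × List (Trans d)) → ℕ,
      ∃ c, PathT H.T p c p ∧
        disp (labels c) = δ + (tl.map fun e => (k e) • e.1).sum ∧
        c.length ≤ 2 * tl.length * H.Q.card + (tl.map k).sum * H.Q.card := by
  induction tl with
  | nil =>
    exact ⟨0, fun k => ⟨[], PathT.nil _, by simp [labels, disp_nil], by simp⟩⟩
  | cons e tl ih =>
    obtain ⟨hyQ, hcyc, hclen, hcd⟩ := htl e (by simp)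
    obtain ⟨w0, hw0⟩ := H.connected p hp e.2.1 hyQ
    obtain ⟨w, hw, hwlen⟩ := short_path H w0.length (le_refl _) hp hw0
    obtain ⟨w0', hw0'⟩ := H.connected e.2.1 hyQ p hp
    obtain ⟨w', hw', hwlen'⟩ := short_path H w0'.length (le_refl _) hyQ hw0' 
    obtain ⟨δ', hδ'⟩ := ih (fun e' he' => htl e' (by simp [he']))
    refine ⟨disp (labels w) + disp (labels w') + δ', fun k => ?_⟩
    obtain ⟨c', hc', hd', hl'⟩ := hδ' k
    obtain ⟨ck, hck, hdk, hlk⟩ := cyc_pow H hcyc (k e)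
    refine ⟨w ++ (ck ++ (w' ++ c')), ?_, ?_, ?_⟩
    · exact pathT_append hw (pathT_append hck (pathT_append hw' hc'))
    · simp only [labels_append, disp_append, hdk, hd', hcd, List.map_cons, List.sum_cons]
      abel
    · have l1 : w.length ≤ H.Q.card := le_of_lt hwlen
      have l2 : w'.length ≤ H.Q.card := le_of_lt hwlen'
      have l3 : ck.length ≤ (k e) * H.Q.card := by
        rw [hlk]; exact Nat.mul_le_mul_left _ hclen
      simp only [List.length_append, List.map_cons, List.sum_cons, List.length_cons]
      calc w.length + (ck.length + (w'.length + c'.length))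
          ≤ H.Q.card + ((k e) * H.Q.card + (H.Q.card +
            (2 * tl.length * H.Q.card + (tl.map k).sum * H.Q.card))) := by
            exact Nat.add_le_add l1 (Nat.add_le_add l3 (Nat.add_le_add l2 hl'))
        _ = 2 * (tl.length + 1) * H.Q.card + ((k e) + (tl.map k).sum) * H.Q.card := by ring

end Graph

end S16


namespace S16GS

variable {d : ℕ}

def Feas {n : ℕ} (v : Fin n → Fin d → ℚ) (A : Finset (Fin n)) (c : ℚ) (lam : Fin n → ℚ) : Prop :=
  (∀ j, 0 ≤ lam j ∧ lam j ≤ 1) ∧ (∀ j, j ∉ A → lam j = 0) ∧ (∑ j, lam j = c) ∧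
  (∀ i, ∑ j, lam j * v j i = 0)

theorem gs_move {n : ℕ} (v : Fin n → Fin d → ℚ) (A : Finset (Fin n)) (c : ℚ) (mu : Fin n → ℚ)
    (hmu : Feas v A c mu)
    (hfrac : d + 2 ≤ (Finset.univ.filter fun j => mu j ≠ 0 ∧ mu j ≠ 1).card) :
    ∃ mu', Feas v A c mu' ∧
      (Finset.univ.filter fun j => mu' j ≠ 0 ∧ mu' j ≠ 1).card <
      (Finset.univ.filter fun j => mu j ≠ 0 ∧ mu j ≠ 1).card := by
  classical
  obtain ⟨hrange, hsupp, hsum, hvec⟩ := hmu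
  set Fr := (Finset.univ.filter fun j => mu j ≠ 0 ∧ mu j ≠ 1) with hFr
  have hFrmem : ∀ j, j ∈ Fr ↔ (mu j ≠ 0 ∧ mu j ≠ 1) := by
    intro j; simp [hFr]
  have hFrlt : ∀ j ∈ Fr, 0 < mu j ∧ mu j < 1 := by
    intro j hj
    obtain ⟨h0, h1⟩ := (hFrmem j).mp hj
    exact ⟨lt_of_le_of_ne (hrange j).1 (Ne.symm h0), lt_of_le_of_ne (hrange j).2 h1⟩
  -- the linear map
  let φ : ((↥Fr : Type) → ℚ) →ₗ[ℚ] (Fin d → ℚ) × ℚ :=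
    { toFun := fun u => (∑ j : ↥Fr, u j • v (j : Fin n), ∑ j : ↥Fr, u j)
      map_add' := by
        intro u1 u2
        simp [add_smul, Finset.sum_add_distrib, Prod.ext_iff]
      map_smul' := by
        intro m u
        simp [smul_smul, Finset.smul_sum, Finset.mul_sum, Prod.ext_iff] }
  have hfin1 : Module.finrank ℚ ((↥Fr : Type) → ℚ) = Fr.card := by
    rw [Module.finrank_fintype_fun_eq_card, Fintype.card_coe]
  have hfin2 : Module.finrank ℚ ((Fin d → ℚ) × ℚ) = d + 1 := by
    rw [Module.finrank_prod, Module.finrank_fintype_fun_eq_card, Module.finrank_self]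
    simp
  have hnotinj : ¬ Function.Injective φ := by
    intro hinj
    have := LinearMap.finrank_le_finrank_of_injective hinj
    rw [hfin1, hfin2] at this
    omega
  rw [Function.not_injective_iff] at hnotinj
  obtain ⟨u1, u2, hphi, hne⟩ := hnotinj
  set w := u1 - u2 with hwdef
  have hw0 : φ w = 0 := by rw [map_sub, hphi, sub_self]
  have hwne : w ≠ 0 := sub_ne_zero.mpr hne
  set U : Fin n → ℚ := fun j => if h : j ∈ Fr then w ⟨j, h⟩ else 0 with hU
  have hUFr : ∀ j, j ∉ Fr → U j = 0 := by
    intro j hj; simp [hU, hj]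
  have hUval : ∀ j : ↥Fr, U j = w j := by
    intro j; simp [hU, j.2]
  have hUsum : ∑ j, U j = 0 := by
    have h1 : ∑ j, U j = ∑ j ∈ Fr, U j :=
      (Finset.sum_subset (Finset.subset_univ Fr) (fun j _ hj => hUFr j hj)).symm
    have h2 : ∑ j ∈ Fr, U j = ∑ j : ↥Fr, U j := (Finset.sum_coe_sort Fr U).symm
    have h3 : ∑ j : ↥Fr, U (j : Fin n) = ∑ j : ↥Fr, w j :=
      Finset.sum_congr rfl (fun j _ => hUval j)
    have h4 : ∑ j : ↥Fr, w j = 0 := by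
      have := congrArg Prod.snd hw0
      exact this
    rw [h1, h2, h3, h4]
  have hUvec : ∀ i, ∑ j, U j * v j i = 0 := by
    intro i
    have h1 : ∑ j, U j * v j i = ∑ j ∈ Fr, U j * v j i :=
      (Finset.sum_subset (Finset.subset_univ Fr)
        (fun j _ hj => by rw [hUFr j hj, zero_mul])).symm
    have h2 : ∑ j ∈ Fr, U j * v j i = ∑ j : ↥Fr, U (j : Fin n) * v (j : Fin n) i :=
      (Finset.sum_coe_sort Fr (fun j => U j * v j i)).symm
    have h3 : ∑ j : ↥Fr, U (j : Fin n) * v (j : Fin n) i = ∑ j : ↥Fr, w j * v (j : Fin n) i :=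
      Finset.sum_congr rfl (fun j _ => by rw [hUval j])
    have h4 : ∑ j : ↥Fr, w j * v (j : Fin n) i = 0 := by
      have h5 := congrArg Prod.fst hw0
      have h6 : (∑ j : ↥Fr, w j • v (j : Fin n)) = 0 := by exact h5
      have h7 := congrFun h6 i
      simpa [Finset.sum_apply] using h7
    rw [h1, h2, h3, h4]
  -- support of U
  have hUex : ∃ j, U j ≠ 0 := by
    have : ∃ j : ↥Fr, w j ≠ 0 := by
      by_contra hno
      push_neg at hno
      exact hwne (funext fun j => hno j)
    obtain ⟨j, hj⟩ := this
    exact ⟨(j : Fin n), by rw [hUval j]; exact hj⟩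
  set suppU := (Finset.univ.filter fun j => U j ≠ 0) with hsuppU
  have hsuppne : suppU.Nonempty := by
    obtain ⟨j, hj⟩ := hUex
    exact ⟨j, by simp [hsuppU, hj]⟩
  have hsuppFr : ∀ j ∈ suppU, j ∈ Fr := by
    intro j hj
    simp only [hsuppU, Finset.mem_filter] at hj
    by_contra hjFr
    exact hj.2 (hUFr j hjFr)
  set bnd : Fin n → ℚ := fun j => if 0 < U j then (1 - mu j) / U j else mu j / (-U j) with hbnd
  set Timg := suppU.image bnd with hTimg
  have hTne : Timg.Nonempty := hsuppne.image bnd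
  set tstar := Timg.min' hTne with htstar
  have hbnd_pos : ∀ j ∈ suppU, 0 < bnd j := by
    intro j hj
    have hjFr := hsuppFr j hj
    obtain ⟨hm0, hm1⟩ := hFrlt j hjFr
    have hUj : U j ≠ 0 := by
      simp only [hsuppU, Finset.mem_filter] at hj; exact hj.2
    by_cases hpos : 0 < U j
    · simp only [hbnd, if_pos hpos]
      exact div_pos (by linarith) hpos
    · have hneg : U j < 0 := lt_of_le_of_ne (not_lt.mp hpos) hUj
      simp only [hbnd, if_neg hpos]
      exact div_pos hm0 (by linarith)
  have htpos : 0 < tstar := by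
    rw [htstar]
    rw [Finset.lt_min'_iff]
    intro b hb
    obtain ⟨j, hj, rfl⟩ := Finset.mem_image.mp hb
    exact hbnd_pos j hj
  have hble : ∀ j ∈ suppU, tstar ≤ bnd j := by
    intro j hj
    exact Finset.min'_le _ _ (Finset.mem_image_of_mem bnd hj)
  set mu' : Fin n → ℚ := fun j => mu j + tstar * U j with hmu'
  have hsame : ∀ j, U j = 0 → mu' j = mu j := by
    intro j hj; simp [hmu', hj]
  have hrange' : ∀ j, 0 ≤ mu' j ∧ mu' j ≤ 1 := by
    intro j
    by_cases hUj : U j = 0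
    · rw [hsame j hUj]; exact hrange j
    · have hjsupp : j ∈ suppU := by simp [hsuppU, hUj]
      have hjFr := hsuppFr j hjsupp
      obtain ⟨hm0, hm1⟩ := hFrlt j hjFr
      have hb := hble j hjsupp
      by_cases hpos : 0 < U j
      · constructor
        · have : 0 ≤ tstar * U j := le_of_lt (mul_pos htpos hpos)
          simp only [hmu']; linarith
        · simp only [hbnd, if_pos hpos] at hb
          have h2 : tstar * U j ≤ ((1 - mu j) / U j) * U j :=
            mul_le_mul_of_nonneg_right hb (le_of_lt hpos)
          rw [div_mul_cancel₀ _ (ne_of_gt hpos)] at h2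
          simp only [hmu']; linarith
      · have hneg : U j < 0 := lt_of_le_of_ne (not_lt.mp hpos) hUj
        constructor
        · simp only [hbnd, if_neg hpos] at hb
          have h2 : tstar * (-U j) ≤ (mu j / (-U j)) * (-U j) :=
            mul_le_mul_of_nonneg_right hb (by linarith)
          rw [div_mul_cancel₀ _ (by linarith : -U j ≠ 0)] at h2
          simp only [hmu']; linarith
        · have : tstar * U j < 0 := mul_neg_of_pos_of_neg htpos hneg
          have := (hrange j).2
          simp only [hmu']; linarith
  have hsupp' : ∀ j, j ∉ A → mu' j = 0 := by
    intro j hj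
    have hj0 : mu j = 0 := hsupp j hj
    have hjFr : j ∉ Fr := by
      rw [hFrmem]; push_neg; intro h; exact absurd hj0 h
    rw [hsame j (hUFr j hjFr), hj0]
  have hsum' : ∑ j, mu' j = c := by
    simp only [hmu']
    rw [Finset.sum_add_distrib, hsum, ← Finset.mul_sum, hUsum, mul_zero, add_zero]
  have hvec' : ∀ i, ∑ j, mu' j * v j i = 0 := by
    intro i
    have : ∀ j, mu' j * v j i = mu j * v j i + tstar * (U j * v j i) := by
      intro j; simp only [hmu']; ring
    simp only [this]
    rw [Finset.sum_add_distrib, hvec i, ← Finset.mul_sum, hUvec i, mul_zero, add_zero]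
  -- strict decrease of fractional support
  have hsub : (Finset.univ.filter fun j => mu' j ≠ 0 ∧ mu' j ≠ 1) ⊆ Fr := by
    intro j hj
    simp only [Finset.mem_filter, Finset.mem_univ, true_and] at hj
    by_contra hjFr
    rw [hsame j (hUFr j hjFr)] at hj
    exact absurd hj ((hFrmem j).not.mp hjFr |> fun h => h)
  obtain ⟨jstar, hjstar, hjbnd⟩ := Finset.mem_image.mp (Finset.min'_mem Timg hTne)
  have hjstarU : U jstar ≠ 0 := by
    simp only [hsuppU, Finset.mem_filter] at hjstar; exact hjstar.2
  have htj : tstar = bnd jstar := by rw [htstar, ← hjbnd]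
  have hjval : mu' jstar = 0 ∨ mu' jstar = 1 := by
    by_cases hpos : 0 < U jstar
    · right
      simp only [hmu']
      rw [htj]
      simp only [hbnd, if_pos hpos]
      rw [div_mul_cancel₀ _ (ne_of_gt hpos)]
      ring
    · left
      have _hneg : U jstar < 0 := lt_of_le_of_ne (not_lt.mp hpos) hjstarU
      simp only [hmu']
      rw [htj]
      simp only [hbnd, if_neg hpos]
      have hcalc : mu jstar / -U jstar * U jstar = -mu jstar := by
        rw [div_neg, neg_mul, div_mul_cancel₀ _ hjstarU]
      rw [hcalc]
      ring
  have hjnot : jstar ∉ (Finset.univ.filter fun j => mu' j ≠ 0 ∧ mu' j ≠ 1) := by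
    simp only [Finset.mem_filter, Finset.mem_univ, true_and, not_and_or, not_not]
    rcases hjval with h | h
    · left; exact h
    · right; exact h
  refine ⟨mu', ⟨hrange', hsupp', hsum', hvec'⟩, ?_⟩
  exact Finset.card_lt_card ((Finset.ssubset_iff_of_subset hsub).mpr
    ⟨jstar, hsuppFr jstar hjstar, hjnot⟩)

end S16GS

namespace More
open S16GS

variable {d : ℕ}

theorem gs_basic {n : ℕ} (v : Fin n → Fin d → ℚ) (A : Finset (Fin n)) (c : ℚ)
    (hne : ∃ lam, Feas v A c lam) :
    ∃ mu, Feas v A c mu ∧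
      (Finset.univ.filter fun j => mu j ≠ 0 ∧ mu j ≠ 1).card ≤ d + 1 := by
  classical
  obtain ⟨lam, hlam⟩ := hne
  have hex : ∃ m : ℕ, ∃ mu, Feas v A c mu ∧
      (Finset.univ.filter fun j => mu j ≠ 0 ∧ mu j ≠ 1).card = m :=
    ⟨_, lam, hlam, rfl⟩
  obtain ⟨mu, hfeas, hcard⟩ := Nat.find_spec hex
  refine ⟨mu, hfeas, ?_⟩
  by_contra hgt
  push_neg at hgt
  obtain ⟨mu', hf', hlt'⟩ := gs_move v A c mu hfeas (by omega)
  exact absurd ⟨mu', hf', rfl⟩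
    (Nat.find_min hex (m := (Finset.univ.filter fun j => mu' j ≠ 0 ∧ mu' j ≠ 1).card)
      (by omega))

theorem gs_zero {n : ℕ} (v : Fin n → Fin d → ℚ) (A : Finset (Fin n)) (k : ℕ) (hA : A.card = k)
    (mu : Fin n → ℚ) (hmu : Feas v A ((k : ℚ) - 1 - d) mu)
    (hfr : (Finset.univ.filter fun j => mu j ≠ 0 ∧ mu j ≠ 1).card ≤ d + 1) :
    ∃ j0 ∈ A, mu j0 = 0 := by
  classical
  by_contra hno
  push_neg at hno
  obtain ⟨hrange, hsupp, hsum, _⟩ := hmu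
  set Fr := (Finset.univ.filter fun j => mu j ≠ 0 ∧ mu j ≠ 1) with hFr
  have hFrA : Fr ⊆ A := by
    intro j hj
    simp only [hFr, Finset.mem_filter, Finset.mem_univ, true_and] at hj
    by_contra hjA
    exact hj.1 (hsupp j hjA)
  have h1 : ∑ j, mu j = ∑ j ∈ A, mu j :=
    (Finset.sum_subset (Finset.subset_univ A) (fun j _ hj => hsupp j hj)).symm
  have hsplit : ∑ j ∈ A \ Fr, mu j + ∑ j ∈ Fr, mu j = ∑ j ∈ A, mu j :=
    Finset.sum_sdiff hFrA
  have hone : ∀ j ∈ A \ Fr, mu j = 1 := by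
    intro j hj
    rw [Finset.mem_sdiff] at hj
    have h2 := hj.2
    simp only [hFr, Finset.mem_filter, Finset.mem_univ, true_and, not_and_or, not_not] at h2
    rcases h2 with h2 | h2
    · exact absurd h2 (hno j hj.1)
    · exact h2
  have h2 : ∑ j ∈ A \ Fr, mu j = ((A \ Fr).card : ℚ) := by
    rw [Finset.sum_congr rfl hone]; simp
  have hcardsd : (A \ Fr).card = k - Fr.card := by
    rw [Finset.card_sdiff_of_subset hFrA, hA]
  have hFrk : Fr.card ≤ k := hA ▸ Finset.card_le_card hFrA
  rcases Finset.eq_empty_or_nonempty Fr with hemp | hnem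
  · have honeA : ∀ j ∈ A, mu j = 1 := by
      intro j hj
      apply hone
      rw [hemp]
      simpa using hj
    have h2' : ∑ j ∈ A, mu j = (k : ℚ) := by
      rw [Finset.sum_congr rfl honeA]
      simp [hA]
    have hk : (k : ℚ) = (k : ℚ) - 1 - d := by
      conv_lhs => rw [← h2', ← h1]
      exact hsum
    have : (0:ℚ) ≤ d := Nat.cast_nonneg d
    linarith
  · have hpos : 0 < ∑ j ∈ Fr, mu j := by
      apply Finset.sum_pos
      · intro j hj
        have hj' := hj
        simp only [hFr, Finset.mem_filter, Finset.mem_univ, true_and] at hj'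
        exact lt_of_le_of_ne (hrange j).1 (Ne.symm hj'.1)
      · exact hnem
    have hcast : (((A \ Fr).card : ℕ) : ℚ) = (k : ℚ) - (Fr.card : ℚ) := by
      rw [hcardsd]
      exact Nat.cast_sub hFrk
    have hFrd : (Fr.card : ℚ) ≤ (d : ℚ) + 1 := by exact_mod_cast hfr
    rw [h1, ← hsplit, h2, hcast] at hsum
    -- (k : ℚ) - Fr.card + S = k - 1 - d, S > 0, Fr.card ≤ d + 1
    linarith

theorem list_sum_apply {α β γ : Type*} [AddCommMonoid γ] (l : List α) (g : α → β → γ) (i : β) :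
    ((l.map g).sum) i = (l.map fun x => g x i).sum := by
  induction l with
  | nil => simp
  | cons a l ih => simp [ih]

theorem qlist_bound {n : ℕ} (v : Fin n → Fin d → ℚ) (M : ℚ) (hM : 0 ≤ M)
    (hv : ∀ j i, |v j i| ≤ M) :
    ∀ (t : List (Fin n)) (i : Fin d), |((t.map v).sum) i| ≤ (t.length : ℚ) * M := by
  intro t
  induction t with
  | nil => intro i; simp
  | cons a t ih =>
    intro i
    have h1 : ((( a :: t).map v).sum) i = v a i + ((t.map v).sum) i := by simp
    rw [h1]
    calc |v a i + ((t.map v).sum) i| ≤ |v a i| + |((t.map v).sum) i| := abs_add_le _ _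
      _ ≤ M + (t.length : ℚ) * M := add_le_add (hv a i) (ih i)
      _ = ((a :: t).length : ℚ) * M := by
        simp only [List.length_cons]
        push_cast
        ring

theorem gs_chain {n : ℕ} (hd : 0 < d) (v : Fin n → Fin d → ℚ) (M : ℚ) (hM : 0 ≤ M)
    (hv : ∀ j i, |v j i| ≤ M) :
    ∀ k : ℕ, ∀ A : Finset (Fin n), A.card = k → d ≤ k →
    (∃ lam, Feas v A ((k : ℚ) - d) lam) →
    ∃ ord : List (Fin n), ord.Nodup ∧ ord.toFinset = A ∧
      ∀ r i, |(((ord.take r).map v).sum) i| ≤ (d : ℚ) * M := by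
  intro k
  induction k using Nat.strong_induction_on with
  | _ k ih =>
  intro A hA hdk hex
  rcases eq_or_lt_of_le hdk with heq | hlt
  · refine ⟨A.toList, Finset.nodup_toList A, Finset.toList_toFinset A, ?_⟩
    intro r i
    calc |(((A.toList.take r).map v).sum) i| ≤ ((A.toList.take r).length : ℚ) * M :=
        qlist_bound v M hM hv (A.toList.take r) i
      _ ≤ (d : ℚ) * M := by
        apply mul_le_mul_of_nonneg_right _ hM
        have h1 : (A.toList.take r).length ≤ A.toList.length := by
          simp [List.length_take]
        have h2 : A.toList.length = k := by rw [Finset.length_toList, hA]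
        have : (A.toList.take r).length ≤ d := by omega
        exact_mod_cast this
  · obtain ⟨lam, hlam⟩ := hex
    have hdk' : (d : ℚ) + 1 ≤ (k : ℚ) := by exact_mod_cast hlt
    have hkd : (0:ℚ) < (k:ℚ) - d := by linarith
    set ρ := ((k:ℚ) - 1 - d) / ((k:ℚ) - d) with hρ
    have hρ0 : 0 ≤ ρ := div_nonneg (by linarith) (le_of_lt hkd)
    have hρ1 : ρ ≤ 1 := by rw [hρ, div_le_one hkd]; linarith
    have hfeas' : Feas v A ((k:ℚ) - 1 - d) (fun j => ρ * lam j) := by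
      obtain ⟨hr, hs, hsum, hvec⟩ := hlam
      refine ⟨fun j => ⟨mul_nonneg hρ0 (hr j).1, ?_⟩,
        fun j hj => by show ρ * lam j = 0; rw [hs j hj, mul_zero], ?_, ?_⟩
      · calc ρ * lam j ≤ 1 * 1 :=
          mul_le_mul hρ1 (hr j).2 (hr j).1 zero_le_one
          _ = 1 := by ring
      · rw [← Finset.mul_sum, hsum, hρ, div_mul_cancel₀ _ (ne_of_gt hkd)]
      · intro i
        simp only [mul_assoc]
        rw [← Finset.mul_sum, hvec i, mul_zero]
    obtain ⟨mu, hmu, hmucard⟩ := gs_basic v A ((k:ℚ) - 1 - d) ⟨_, hfeas'⟩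
    obtain ⟨j0, hj0A, hj0⟩ := gs_zero v A k hA mu hmu hmucard
    have hj0Feas : Feas v (A.erase j0) ((k:ℚ) - 1 - d) mu := by
      obtain ⟨hr, hs, hsum, hvec⟩ := hmu
      refine ⟨hr, fun j hj => ?_, hsum, hvec⟩
      by_cases hjj : j = j0
      · rw [hjj]; exact hj0
      · exact hs j (fun hjA => hj (Finset.mem_erase.mpr ⟨hjj, hjA⟩))
    have hk1 : 1 ≤ k := by omega
    have hcast : (((k - 1 : ℕ)) : ℚ) - d = (k:ℚ) - 1 - d := by
      have : ((k - 1 : ℕ) : ℚ) = (k : ℚ) - 1 := by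
        push_cast [Nat.cast_sub hk1]; ring
      rw [this]
    obtain ⟨ord', hnd', htf', hpre'⟩ := ih (k-1) (by omega) (A.erase j0)
      (by rw [Finset.card_erase_of_mem hj0A, hA]) (by omega)
      ⟨mu, by rw [hcast]; exact hj0Feas⟩
    have hj0ord : j0 ∉ ord' := by
      intro hmem
      have : j0 ∈ A.erase j0 := htf' ▸ List.mem_toFinset.mpr hmem
      exact (Finset.notMem_erase j0 A) this
    have hndapp : (ord' ++ [j0]).Nodup := by
      simp [List.nodup_append, hnd', hj0ord]; exact fun a ha h => hj0ord (h ▸ ha)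
    have htfapp : (ord' ++ [j0]).toFinset = A := by
      rw [List.toFinset_append, htf']
      simp only [List.toFinset_cons, List.toFinset_nil, Finset.insert_empty]
      rw [Finset.union_comm, ← Finset.insert_eq, Finset.insert_erase hj0A]
    refine ⟨ord' ++ [j0], hndapp, htfapp, ?_⟩
    intro r i
    by_cases hrlen : r ≤ ord'.length
    · rw [List.take_append_of_le_length hrlen]
      exact hpre' r i
    · have hwhole : (ord' ++ [j0]).take r = ord' ++ [j0] :=
        List.take_of_length_le (by simp; omega)
      rw [hwhole]
      have hsum_eq : (((ord' ++ [j0]).map v).sum) i = ∑ j ∈ A, v j i := by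
        rw [list_sum_apply]
        rw [← List.sum_toFinset _ hndapp, htfapp]
      rw [hsum_eq]
      -- bound via lam at level k
      obtain ⟨hr', hs', hsum', hvec'⟩ := hlam
      have hAl : ∑ j ∈ A, lam j = (k:ℚ) - d := by
        rw [← hsum']
        exact Finset.sum_subset (Finset.subset_univ A) (fun j _ hj => hs' j hj)
      have hAv : ∑ j ∈ A, lam j * v j i = 0 := by
        rw [← hvec' i]
        exact Finset.sum_subset (Finset.subset_univ A)
          (fun j _ hj => by rw [hs' j hj, zero_mul])
      have heq1 : ∑ j ∈ A, v j i = ∑ j ∈ A, (1 - lam j) * v j i := by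
        have : ∀ j ∈ A, (1 - lam j) * v j i = v j i - lam j * v j i := by
          intro j _; ring
        rw [Finset.sum_congr rfl this, Finset.sum_sub_distrib, hAv, sub_zero]
      rw [heq1]
      calc |∑ j ∈ A, (1 - lam j) * v j i| ≤ ∑ j ∈ A, |(1 - lam j) * v j i| :=
          Finset.abs_sum_le_sum_abs _ _
        _ ≤ ∑ j ∈ A, (1 - lam j) * M := by
          apply Finset.sum_le_sum
          intro j _
          rw [abs_mul, abs_of_nonneg (by linarith [(hr' j).2] : (0:ℚ) ≤ 1 - lam j)]
          exact mul_le_mul_of_nonneg_left (hv j i) (by linarith [(hr' j).2])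
        _ = ((k : ℚ) - ((k:ℚ) - d)) * M := by
          rw [← Finset.sum_mul, Finset.sum_sub_distrib, hAl, Finset.sum_const, hA]
          simp
        _ = (d : ℚ) * M := by ring

end More

namespace Wrap
open S16GS More

variable {d : ℕ}

theorem natAbs_listsum_le {X : Type*} (f : X → Fin d → ℤ) (M : ℕ) :
    ∀ (t : List X), (∀ x ∈ t, ∀ i, ((f x) i).natAbs ≤ M) →
    ∀ i, (((t.map f).sum) i).natAbs ≤ M * t.length := by
  intro t
  induction t with
  | nil => intro _ i; simp
  | cons a t ih =>
    intro hmem i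
    have h1 : (((a :: t).map f).sum) i = f a i + ((t.map f).sum) i := by simp
    rw [h1]
    calc (f a i + ((t.map f).sum) i).natAbs
        ≤ (f a i).natAbs + (((t.map f).sum) i).natAbs := Int.natAbs_add_le _ _
      _ ≤ M + M * t.length :=
          Nat.add_le_add (hmem a (by simp) i) (ih (fun x hx => hmem x (by simp [hx])) i)
      _ = M * (a :: t).length := by simp [List.length_cons]; ring

theorem steinitz_list {X : Type*} (hd : 0 < d) (f : X → Fin d → ℤ) (M : ℕ) (l : List X)
    (hb : ∀ x ∈ l, ∀ i, ((f x) i).natAbs ≤ M) (h0 : (l.map f).sum = 0) :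
    ∃ l' : List X, l'.Perm l ∧ ∀ r i, ((((l'.take r).map f).sum) i).natAbs ≤ d * M := by
  classical
  rcases lt_or_ge l.length d with hsmall | hbig
  · refine ⟨l, List.Perm.refl l, ?_⟩
    intro r i
    have h1 := natAbs_listsum_le f M (l.take r)
      (fun x hx => hb x (List.mem_of_mem_take hx)) i
    have h2 : (l.take r).length ≤ l.length := by simp [List.length_take]
    calc ((((l.take r).map f).sum) i).natAbs ≤ M * (l.take r).length := h1
      _ ≤ M * d := Nat.mul_le_mul_left M (by omega)
      _ = d * M := Nat.mul_comm M d
  · set n := l.length with hn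
    set v : Fin n → Fin d → ℚ := fun j i => ((f (l.get j) i : ℤ) : ℚ) with hv
    have habs : ∀ (z : ℤ), |((z : ℤ) : ℚ)| = ((z.natAbs : ℕ) : ℚ) := by
      intro z
      rw [Nat.cast_natAbs, Int.cast_abs]
    have hvb : ∀ j i, |v j i| ≤ (M : ℚ) := by
      intro j i
      have h1 := hb (l.get j) (l.get_mem j) i
      rw [hv]
      simp only []
      rw [habs]
      exact_mod_cast h1
    have hcast : ∀ (t : List (Fin n)) (i : Fin d),
        ((((t.map (fun j => f (l.get j))).sum) i : ℤ) : ℚ) = ((t.map v).sum) i := by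
      intro t i
      induction t with
      | nil => simp
      | cons a t ih =>
        simp only [List.map_cons, List.sum_cons, Pi.add_apply]
        push_cast
        rw [ih]
    have hgetmap : ∀ (g : (Fin d → ℤ) → ℤ), True := fun _ => trivial
    have hlistid : ((List.finRange n).map (fun j => f (l.get j))) = l.map f := by
      have : (fun j => f (l.get j)) = f ∘ l.get := rfl
      rw [this, ← List.map_map, List.map_get_finRange]
    have hzero : ∀ i, ∑ j : Fin n, v j i = 0 := by
      intro i
      have h1 : ∑ j : Fin n, v j i =
          ((∑ j : Fin n, f (l.get j) i : ℤ) : ℚ) := by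
        rw [Int.cast_sum]
      have h2 : ∑ j : Fin n, f (l.get j) i =
          (((List.finRange n).map (fun j => f (l.get j) i))).sum := by
        rw [Fin.sum_univ_def]
      have h3 : (((List.finRange n).map (fun j => f (l.get j) i))).sum
          = ((l.map f).sum) i := by
        rw [list_sum_apply (List.finRange n) (fun j => f (l.get j)) i |>.symm, hlistid]
      rw [h1, h2, h3, h0]
      simp
    have hnpos : 0 < n := lt_of_lt_of_le hd hbig
    have hnne : ((n : ℚ)) ≠ 0 := by positivity
    have hdn : (d : ℚ) ≤ (n : ℚ) := by exact_mod_cast hbig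
    set lam : Fin n → ℚ := fun _ => ((n:ℚ) - d)/(n:ℚ) with hlam
    have hfeas : Feas v Finset.univ ((n : ℚ) - d) lam := by
      refine ⟨fun j => ⟨?_, ?_⟩, fun j hj => absurd (Finset.mem_univ j) hj, ?_, ?_⟩
      · exact div_nonneg (by linarith) (by positivity)
      · rw [hlam]
        simp only []
        rw [div_le_one (by positivity)]
        have : (0:ℚ) ≤ d := Nat.cast_nonneg d
        linarith
      · rw [hlam]
        simp only [Finset.sum_const, Finset.card_univ, Fintype.card_fin, nsmul_eq_mul]
        rw [mul_div_cancel₀ _ hnne]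
      · intro i
        rw [hlam]
        simp only []
        rw [← Finset.mul_sum, hzero i, mul_zero]
    obtain ⟨ord, hnd, htf, hpre⟩ := gs_chain hd v (M : ℚ) (Nat.cast_nonneg M) hvb n
      Finset.univ (by simp) hbig ⟨lam, hfeas⟩
    refine ⟨ord.map l.get, ?_, ?_⟩
    · have h1 : ord.Perm (List.finRange n) :=
        List.perm_of_nodup_nodup_toFinset_eq hnd (List.nodup_finRange n)
          (by rw [htf, List.toFinset_finRange])
      have h2 := h1.map l.get
      rwa [List.map_get_finRange] at h2
    · intro r i
      have h3 : ((ord.map l.get).take r).map f = (ord.take r).map (fun j => f (l.get j)) := by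
        rw [← List.map_take, List.map_map]
        rfl
      rw [h3]
      have hq := hpre r i
      have hc := hcast (ord.take r) i
      set z := (((ord.take r).map (fun j => f (l.get j))).sum) i with hz
      rw [← hc] at hq
      rw [habs z] at hq
      exact_mod_cast hq

end Wrap

namespace Rep
open S16GS More Wrap

variable {d : ℕ}

theorem list_range_sum {γ : Type*} [AddCommMonoid γ] (g : ℕ → γ) (m : ℕ) :
    ((List.range m).map g).sum = ∑ jj ∈ Finset.range m, g jj := by
  induction m with
  | zero => simp
  | succ m ih =>
    rw [List.range_succ, List.map_append, List.sum_append, Finset.sum_range_succ, ih]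
    simp

theorem natAbs_apply_sum_le (t : List (Fin d → ℤ)) (i : Fin d) :
    ((t.sum) i).natAbs ≤ (t.map (fun w => (w i).natAbs)).sum := by
  induction t with
  | nil => simp
  | cons a t ih =>
    simp only [List.sum_cons, Pi.add_apply, List.map_cons]
    exact le_trans (Int.natAbs_add_le _ _) (Nat.add_le_add_left ih _)

theorem subperm_natsum_le {α : Type*} (g : α → ℕ) {t u : List α} (h : t.Subperm u) :
    (t.map g).sum ≤ (u.map g).sum := by
  rcases h with ⟨mid, hp, hs⟩
  have h1 : (mid.map g).sum = (t.map g).sum := (hp.map g).sum_eq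
  have h2 : (mid.map g).Sublist (u.map g) := hs.map g
  rw [← h1]
  exact h2.sum_le_sum (fun a _ => Nat.zero_le a)

theorem take_filter {α : Type*} (p : α → Bool) :
    ∀ (l : List α) (r : ℕ), ∃ nn, (l.take nn).filter p = (l.filter p).take r := by
  intro l
  induction l with
  | nil => intro r; exact ⟨0, by simp⟩
  | cons a l ih =>
    intro r
    by_cases hpa : p a
    · cases r with
      | zero => exact ⟨0, by simp⟩
      | succ r =>
        obtain ⟨nn, hnn⟩ := ih r
        refine ⟨nn + 1, ?_⟩
        simp only [List.take_succ_cons, List.filter_cons_of_pos hpa, hnn]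
    · obtain ⟨nn, hnn⟩ := ih r
      refine ⟨nn + 1, ?_⟩
      simp only [List.take_succ_cons, List.filter_cons_of_neg (by simpa using hpa), hnn]

theorem small_rep (hd : 0 < d) (V : Set (Fin d → ℤ)) (M R : ℕ) (hM : 1 ≤ M)
    (hV : ∀ w ∈ V, ∀ i, (w i).natAbs ≤ M) (b : Fin d → ℤ) (hbR : ∀ i, (b i).natAbs ≤ R)
    (hex : ∃ l : List (Fin d → ℤ), (∀ w ∈ l, w ∈ V) ∧ l.sum = b) :
    ∃ l : List (Fin d → ℤ), (∀ w ∈ l, w ∈ V) ∧ l.sum = b ∧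
      l.length ≤ (2 * (d * M + R) + 1) ^ d := by
  classical
  obtain ⟨l0, hl0V, hl0s⟩ := hex
  have hexm : ∃ m, ∃ l : List (Fin d → ℤ),
      ((∀ w ∈ l, w ∈ V) ∧ l.sum = b) ∧ l.length = m := ⟨_, l0, ⟨hl0V, hl0s⟩, rfl⟩
  obtain ⟨ws, ⟨hwsV, hwsum⟩, hwslen⟩ := Nat.find_spec hexm
  refine ⟨ws, hwsV, hwsum, ?_⟩
  by_contra hbig
  push_neg at hbig
  -- pieces
  set pvec : ℕ → (Fin d → ℤ) := fun jj => fun i =>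
    if jj < (b i).natAbs then -(b i).sign else 0 with hpvec
  set plist := (List.range R).map pvec with hplist
  have hpsum : ∀ i, (plist.sum) i = - b i := by
    intro i
    have h1 : (plist.sum) i = ((List.range R).map (fun jj => pvec jj i)).sum := by
      rw [hplist]
      exact list_sum_apply (List.range R) pvec i
    rw [h1, list_range_sum]
    have h2 : ∑ jj ∈ Finset.range R, pvec jj i
        = ∑ jj ∈ Finset.range ((b i).natAbs), pvec jj i := by
      symm
      apply Finset.sum_subset (Finset.range_subset_range.mpr (hbR i))
      intro x _ hx
      rw [Finset.mem_range, not_lt] at hx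
      simp only [hpvec]
      rw [if_neg (by omega)]
    rw [h2]
    have h3 : ∀ jj ∈ Finset.range ((b i).natAbs), pvec jj i = -(b i).sign := by
      intro jj hjj
      rw [Finset.mem_range] at hjj
      simp only [hpvec]
      rw [if_pos hjj]
    rw [Finset.sum_congr rfl h3, Finset.sum_const, Finset.card_range]
    rw [nsmul_eq_mul, mul_neg, ← neg_eq_iff_eq_neg, neg_neg]
    rw [mul_comm]
    exact Int.sign_mul_natAbs (b i)
  have hpb : ∀ x ∈ plist, ∀ i, (x i).natAbs ≤ M := by
    intro x hx i
    rw [hplist] at hx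
    obtain ⟨jj, _, rfl⟩ := List.mem_map.mp hx
    simp only [hpvec]
    by_cases hlt : jj < (b i).natAbs
    · rw [if_pos hlt]
      rw [Int.natAbs_neg, Int.natAbs_sign]
      split <;> omega
    · rw [if_neg hlt]
      simp
  have hptot : ∀ i, (plist.map (fun w => (w i).natAbs)).sum ≤ R := by
    intro i
    rw [hplist, List.map_map]
    have hcomp : ((fun w : Fin d → ℤ => (w i).natAbs) ∘ pvec)
        = fun jj => (pvec jj i).natAbs := rfl
    rw [hcomp, list_range_sum]
    have hterm : ∀ jj ∈ Finset.range R, (pvec jj i).natAbs ≤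
        if jj < (b i).natAbs then 1 else 0 := by
      intro jj _
      simp only [hpvec]
      split
      · rw [Int.natAbs_neg, Int.natAbs_sign]
        split <;> omega
      · simp
    calc ∑ jj ∈ Finset.range R, (pvec jj i).natAbs
        ≤ ∑ jj ∈ Finset.range R, (if jj < (b i).natAbs then 1 else 0) :=
          Finset.sum_le_sum hterm
      _ = ∑ jj ∈ Finset.range ((b i).natAbs), (if jj < (b i).natAbs then 1 else 0) := by
          symm
          apply Finset.sum_subset (Finset.range_subset_range.mpr (hbR i))
          intro x _ hx
          rw [Finset.mem_range, not_lt] at hx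
          rw [if_neg (by omega)]
      _ = (b i).natAbs := by
          rw [Finset.sum_congr rfl (fun x hx => if_pos (Finset.mem_range.mp hx))]
          simp
      _ ≤ R := hbR i
  -- combined tagged list
  set comb : List ((Fin d → ℤ) × Bool) :=
    ws.map (fun w => (w, true)) ++ plist.map (fun w => (w, false)) with hcomb
  have hcombb : ∀ x ∈ comb, ∀ i, ((Prod.fst x) i).natAbs ≤ M := by
    intro x hx i
    rw [hcomb, List.mem_append] at hx
    rcases hx with hx | hx
    · obtain ⟨w, hw, rfl⟩ := List.mem_map.mp hx
      exact hV w (hwsV w hw) i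
    · obtain ⟨w, hw, rfl⟩ := List.mem_map.mp hx
      exact hpb w hw i
  have hcombsum : (comb.map Prod.fst).sum = 0 := by
    rw [hcomb, List.map_append, List.sum_append, List.map_map, List.map_map]
    have e1 : (Prod.fst ∘ fun w : Fin d → ℤ => (w, true)) = id := rfl
    have e2 : (Prod.fst ∘ fun w : Fin d → ℤ => (w, false)) = id := rfl
    rw [e1, e2, List.map_id, List.map_id, hwsum]
    have hpl : plist.sum = -b := funext fun i => (hpsum i).trans (Pi.neg_apply b i).symm
    rw [hpl]
    exact add_neg_cancel b
  obtain ⟨l'', hperm, hpre⟩ := steinitz_list hd Prod.fst M comb hcombb hcombsum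
  set ws' := (l''.filter (fun e => e.2)).map Prod.fst with hws'
  have hfiltcomb : comb.filter (fun e => e.2) = ws.map (fun w => (w, true)) := by
    rw [hcomb, List.filter_append]
    have h1 : (ws.map (fun w => (w, true))).filter (fun e => e.2)
        = ws.map (fun w => (w, true)) := by
      apply List.filter_eq_self.mpr
      intro e he
      obtain ⟨w, _, rfl⟩ := List.mem_map.mp he
      rfl
    have h2 : (plist.map (fun w => (w, false))).filter (fun e => e.2) = [] := by
      rw [List.filter_eq_nil_iff]
      intro e he
      obtain ⟨w, _, rfl⟩ := List.mem_map.mp he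
      simp
    rw [h1, h2, List.append_nil]
  have hfiltcomb' : comb.filter (fun e => !e.2) = plist.map (fun w => (w, false)) := by
    rw [hcomb, List.filter_append]
    have h1 : (ws.map (fun w => (w, true))).filter (fun e => !e.2) = [] := by
      rw [List.filter_eq_nil_iff]
      intro e he
      obtain ⟨w, _, rfl⟩ := List.mem_map.mp he
      simp
    have h2 : (plist.map (fun w => (w, false))).filter (fun e => !e.2)
        = plist.map (fun w => (w, false)) := by
      apply List.filter_eq_self.mpr
      intro e he
      obtain ⟨w, _, rfl⟩ := List.mem_map.mp he
      rfl
    rw [h1, h2, List.nil_append]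
  have hws'perm : ws'.Perm ws := by
    have h1 := (hperm.filter (fun e => e.2)).map Prod.fst
    rw [hfiltcomb, List.map_map] at h1
    have e1 : (Prod.fst ∘ fun w : Fin d → ℤ => (w, true)) = id := rfl
    rw [e1, List.map_id] at h1
    exact h1
  have hws'len : ws'.length = ws.length := hws'perm.length_eq
  have hws'V : ∀ w ∈ ws', w ∈ V := fun w hw => hwsV w (hws'perm.mem_iff.mp hw)
  have hws'sum : ws'.sum = b := by rw [hws'perm.sum_eq, hwsum]
  have hprews : ∀ r i, (((ws'.take r).sum) i).natAbs ≤ d * M + R := by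
    intro r i
    obtain ⟨nn, hnn⟩ := take_filter (fun e => e.2) l'' r
    have e1 : ws'.take r = (((l''.take nn).filter (fun e => e.2)).map Prod.fst) := by
      rw [hws', ← List.map_take, ← hnn]
    have hsplitP : (((l''.take nn).map Prod.fst).sum)
        = (((l''.take nn).filter (fun e => e.2)).map Prod.fst).sum
        + (((l''.take nn).filter (fun e => !e.2)).map Prod.fst).sum := by
      have h4 := (List.filter_append_perm (fun e => e.2) (l''.take nn)).map Prod.fst
      have h5 := h4.sum_eq
      rw [List.map_append, List.sum_append] at h5
      exact h5.symm
    have hsubp : (((l''.take nn).filter (fun e => !e.2)).map Prod.fst).Subperm plist := by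
      have h6 : ((l''.take nn).filter (fun e => !e.2)).Sublist
          (l''.filter (fun e => !e.2)) := (List.take_sublist nn l'').filter _
      have h7 := h6.map Prod.fst
      have h8 : ((l''.filter (fun e => !e.2)).map Prod.fst).Perm plist := by
        have h9 := (hperm.filter (fun e => !e.2)).map Prod.fst
        rw [hfiltcomb', List.map_map] at h9
        have e2 : (Prod.fst ∘ fun w : Fin d → ℤ => (w, false)) = id := rfl
        rw [e2, List.map_id] at h9
        exact h9
      exact h7.subperm.trans h8.subperm
    have hpiece : ((((l''.take nn).filter (fun e => !e.2)).map Prod.fst).sum i).natAbs ≤ R :=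
      le_trans (natAbs_apply_sum_le _ i)
        (le_trans (subperm_natsum_le (fun w => (w i).natAbs) hsubp) (hptot i))
    have hPbound := hpre nn i
    have heqsub : ((ws'.take r).sum) i = (((l''.take nn).map Prod.fst).sum) i
        - ((((l''.take nn).filter (fun e => !e.2)).map Prod.fst).sum) i := by
      rw [e1]
      have h10 := congrFun hsplitP i
      rw [Pi.add_apply] at h10
      omega
    rw [heqsub]
    calc ((((l''.take nn).map Prod.fst).sum) i
          - ((((l''.take nn).filter (fun e => !e.2)).map Prod.fst).sum) i).natAbs
        ≤ ((((l''.take nn).map Prod.fst).sum) i).natAbs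
          + (((((l''.take nn).filter (fun e => !e.2)).map Prod.fst).sum) i).natAbs :=
          Int.natAbs_sub_le _ _
      _ ≤ d * M + R := Nat.add_le_add hPbound hpiece
  -- pigeonhole on prefix sums
  set L := ws.length with hL
  set SS := d * M + R with hSS
  set psum : Fin (L+1) → (Fin d → ℤ) := fun r => (ws'.take (r : ℕ)).sum with hpsumdef
  have hmaps : ∀ r : Fin (L+1), r ∈ (Finset.univ : Finset (Fin (L+1))) → psum r ∈
      Finset.Icc (fun _ : Fin d => -(SS:ℤ)) (fun _ => (SS:ℤ)) := by
    intro r _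
    rw [Finset.mem_Icc]
    constructor <;> rw [Pi.le_def] <;> intro i <;>
      · have h11 := hprews (r : ℕ) i
        simp only [hpsumdef]
        omega
  have hcardIcc : (Finset.Icc (fun _ : Fin d => -(SS:ℤ)) (fun _ => (SS:ℤ))).card
      = (2*SS+1)^d := by
    rw [Pi.card_Icc]
    have h1 : (Finset.Icc (-(SS:ℤ)) ((SS:ℤ))).card = 2*SS+1 := by
      rw [Int.card_Icc]
      omega
    simp [h1]
  have hltcard : (Finset.Icc (fun _ : Fin d => -(SS:ℤ)) (fun _ => (SS:ℤ))).card
      < (Finset.univ : Finset (Fin (L+1))).card := by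
    rw [hcardIcc, Finset.card_univ, Fintype.card_fin]
    have : (2 * (d * M + R) + 1) ^ d < L := hbig
    omega
  obtain ⟨r1, _, r2, _, hne, heq⟩ :=
    Finset.exists_ne_map_eq_of_card_lt_of_maps_to hltcard hmaps
  have hcut : ∀ (ra rb : Fin (L+1)), ra < rb → psum ra = psum rb → False := by
    intro ra rb hab hpeq
    have hab' : (ra : ℕ) < (rb : ℕ) := hab
    have hsplit2 : ws'.sum = (ws'.take (rb:ℕ)).sum + (ws'.drop (rb:ℕ)).sum := by
      conv_lhs => rw [← List.take_append_drop (rb:ℕ) ws']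
      rw [List.sum_append]
    have hpeq' : (ws'.take (ra:ℕ)).sum = (ws'.take (rb:ℕ)).sum := hpeq
    have hsum2 : (ws'.take (ra:ℕ) ++ ws'.drop (rb:ℕ)).sum = b := by
      rw [List.sum_append, hpeq', ← hsplit2]
      exact hws'sum
    have hlen2 : (ws'.take (ra:ℕ) ++ ws'.drop (rb:ℕ)).length < ws.length := by
      have h11 : (rb:ℕ) ≤ L := Nat.lt_succ_iff.mp rb.isLt
      rw [List.length_append, List.length_take, List.length_drop, hws'len]
      have hL' : ws.length = L := hL
      omega
    have hmem2 : ∀ w ∈ ws'.take (ra:ℕ) ++ ws'.drop (rb:ℕ), w ∈ V := by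
      intro w hw
      rw [List.mem_append] at hw
      rcases hw with hw | hw
      · exact hws'V w (List.mem_of_mem_take hw)
      · exact hws'V w (List.mem_of_mem_drop hw)
    exact absurd ⟨_, ⟨hmem2, hsum2⟩, rfl⟩
      (Nat.find_min hexm (show (ws'.take (ra:ℕ) ++ ws'.drop (rb:ℕ)).length < Nat.find hexm by
        rw [← hwslen]; exact hlen2))
  rcases lt_or_gt_of_ne hne with h | h
  · exact hcut r1 r2 h heq
  · exact hcut r2 r1 h heq.symm

end Rep



theorem numeric16 (d a s Qc V Lw x : ℕ) (hd : 1 ≤ d)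
    (ha : 1 ≤ a) (hs : 1 ≤ s) (hx : x = (1 + 2*a) * s) (hQ1 : 1 ≤ Qc)
    (hQ : Qc ≤ x ^ (d ^ d))
    (hV : V ≤ (2 * (a * Qc) + 1) ^ d)
    (hL : Lw ≤ (2 * (d * (a * Qc) + ((s - 1) + a * Qc + a * (2 * V * Qc))) + 1) ^ d) :
    2 * V * Qc + Lw * Qc + Qc ≤ 2 * x ^ (7 * d ^ (d + 2)) := by
  set D := d ^ d with hD
  have hD1 : 1 ≤ D := Nat.one_le_pow _ _ (by omega)
  have hx3 : 3 ≤ x := by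
    rw [hx]
    calc 3 = 3 * 1 := rfl
      _ ≤ (1 + 2*a) * s := Nat.mul_le_mul (by omega) hs
  have hx1 : 1 ≤ x := by omega
  have h2a : 2*a + 1 ≤ x := by
    rw [hx]
    calc 2*a+1 = (1+2*a) * 1 := by ring
      _ ≤ (1+2*a) * s := Nat.mul_le_mul_left _ hs
  have hsx : s ≤ x := by
    rw [hx]
    calc s = 1 * s := (one_mul s).symm
      _ ≤ (1+2*a)*s := Nat.mul_le_mul_right s (by omega)
  have hmono : ∀ {i j : ℕ}, i ≤ j → x^i ≤ x^j := fun h => Nat.pow_le_pow_right hx1 h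
  have hb2 : 2*(a*Qc) + 1 ≤ x^(D+1) := by
    have e1 : (2*a)*Qc ≤ (x-1)*Qc := Nat.mul_le_mul_right Qc (by omega)
    have e2 : (x-1)*Qc + Qc = x*Qc := by
      have e : x - 1 + 1 = x := by omega
      calc (x-1)*Qc + Qc = (x-1+1)*Qc := by ring
        _ = x*Qc := by rw [e]
    have e3 : x*Qc ≤ x^(D+1) := by
      calc x*Qc ≤ x * x^D := Nat.mul_le_mul_left x hQ
        _ = x^(D+1) := by rw [pow_succ]; ring
    have e4 : 2*(a*Qc) = (2*a)*Qc := by ring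
    omega
  have hVx : V ≤ x^(d*D + d) := by
    calc V ≤ (2*(a*Qc)+1)^d := hV
      _ ≤ (x^(D+1))^d := Nat.pow_le_pow_left hb2 d
      _ = x^(d*D+d) := by rw [← pow_mul]; ring_nf
  have hVQ : V * Qc ≤ x^(d*D+d+D) := by
    calc V*Qc ≤ x^(d*D+d) * x^D := Nat.mul_le_mul hVx hQ
      _ = x^(d*D+d+D) := by rw [← pow_add]
  have haQc : a*Qc ≤ x^(D+1) := by omega
  have hdel : a*(2*V*Qc) ≤ x^(d*D+d+D+1) := by
    calc a*(2*V*Qc) = (2*a)*(V*Qc) := by ring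
      _ ≤ x * x^(d*D+d+D) := Nat.mul_le_mul (by omega) hVQ
      _ = x^(d*D+d+D+1) := by rw [← pow_succ']
  have hs1 : s - 1 ≤ x^(d*D+d+D+1) := by
    have : x = x^1 := (pow_one x).symm
    have h2 : x^1 ≤ x^(d*D+d+D+1) := hmono (by omega)
    omega
  have haQc2 : a*Qc ≤ x^(d*D+d+D+1) := le_trans haQc (hmono (by omega))
  have hdM : d * (a*Qc) ≤ x^(d*D+d+D+1) := by
    have h1 : d ≤ x^d := by
      calc d ≤ 2^d := (Nat.lt_two_pow_self (n := d)).le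
        _ ≤ x^d := Nat.pow_le_pow_left (by omega) d
    calc d*(a*Qc) ≤ x^d * x^(D+1) := Nat.mul_le_mul h1 haQc
      _ = x^(d+(D+1)) := by rw [← pow_add]
      _ ≤ x^(d*D+d+D+1) := hmono (by omega)
  have hSS : 2*(d*(a*Qc) + ((s-1) + a*Qc + a*(2*V*Qc))) + 1 ≤ 9 * x^(d*D+d+D+1) := by
    have h2 : 1 ≤ x^(d*D+d+D+1) := Nat.one_le_pow _ _ (by omega)
    omega
  have hLw : Lw ≤ 9^d * x^(d*(d*D+d+D+1)) := by
    calc Lw ≤ (2*(d*(a*Qc) + ((s-1) + a*Qc + a*(2*V*Qc))) + 1)^d := hL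
      _ ≤ (9 * x^(d*D+d+D+1))^d := Nat.pow_le_pow_left hSS d
      _ = 9^d * x^(d*(d*D+d+D+1)) := by rw [mul_pow, ← pow_mul, Nat.mul_comm (d*D+d+D+1) d]
  set Em := d*(d*D+d+D+1) + D with hEm
  have hLwQc : Lw * Qc ≤ 9^d * x^Em := by
    calc Lw*Qc ≤ (9^d * x^(d*(d*D+d+D+1))) * x^D := Nat.mul_le_mul hLw hQ
      _ = 9^d * x^Em := by rw [mul_assoc, ← pow_add]
  have hT1 : 2*V*Qc ≤ 2 * x^Em := by
    have h1 : V*Qc ≤ x^Em := by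
      apply le_trans hVQ (hmono ?_)
      have h2 : (d*D+d+D+1) ≤ d*(d*D+d+D+1) := Nat.le_mul_of_pos_left _ (by omega)
      rw [hEm]
      omega
    have e : 2*V*Qc = 2*(V*Qc) := by ring
    omega
  have hQcEm : Qc ≤ x^Em := le_trans hQ (hmono (by omega))
  have htot : 2*V*Qc + Lw*Qc + Qc ≤ (3 + 9^d) * x^Em := by
    have e : (3 + 9^d) * x^Em = 2*x^Em + 9^d*x^Em + x^Em := by ring
    omega
  have h9 : 3 + 9^d ≤ 2 * x^(2*d) := by
    have h1 : (9:ℕ)^d = 3^(2*d) := by rw [pow_mul]; norm_num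
    have h2 : (3:ℕ)^(2*d) ≤ x^(2*d) := Nat.pow_le_pow_left hx3 _
    have h3 : 3 ≤ (3:ℕ)^(2*d) := by
      calc (3:ℕ) = 3^1 := (pow_one 3).symm
        _ ≤ 3^(2*d) := Nat.pow_le_pow_right (by norm_num) (by omega)
    omega
  have hfin : (3 + 9^d) * x^Em ≤ 2 * x^(2*d + Em) := by
    calc (3 + 9^d) * x^Em ≤ (2 * x^(2*d)) * x^Em := Nat.mul_le_mul_right _ h9
      _ = 2 * x^(2*d + Em) := by rw [mul_assoc, ← pow_add]
  have hexp : 2*d + Em ≤ 7 * d^(d+2) := by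
    have hpow : d^(d+2) = D*(d*d) := by
      rw [hD, pow_add, pow_two]
    rw [hpow]
    have a1 : d*d ≤ d*d*D := Nat.le_mul_of_pos_right (d*d) (by omega)
    have a2 : d*D ≤ d*d*D := by
      calc d*D = 1*(d*D) := (one_mul _).symm
        _ ≤ d*(d*D) := Nat.mul_le_mul_right _ hd
        _ = d*d*D := by ring
    have a3 : d ≤ d*d*D := by
      calc d = d*1 := (mul_one d).symm
        _ ≤ d*(d*D) := Nat.mul_le_mul_left d (Nat.mul_pos (by omega) (by omega))
        _ = d*d*D := by ring
    have a4 : D ≤ d*d*D := by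
      calc D = 1*D := (one_mul D).symm
        _ ≤ (d*d)*D := Nat.mul_le_mul_right D (Nat.mul_pos (by omega) (by omega))
    have expand : 2*d + Em = d*d*D + d*d + d*D + 3*d + D := by rw [hEm]; ring
    rw [expand]
    have e7 : 7*(D*(d*d)) = d*d*D + 6*(d*d*D) := by ring
    rw [e7]
    linarith [a1, a2, a3, a4]
  calc 2*V*Qc + Lw*Qc + Qc ≤ (3 + 9^d) * x^Em := htot
    _ ≤ 2 * x^(2*d + Em) := hfin
    _ ≤ 2 * x^(7 * d^(d+2)) := Nat.mul_le_mul_left 2 (hmono hexp)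


namespace S16

variable {d : ℕ} {A : Finset (Fin d → ℤ)} {K : Finset (Fin d)}

theorem cycD_bound (H : WitnessGraph d A K) :
    ∀ v ∈ CycD H, ∀ i, (v i).natAbs ≤ Anorm A * H.Q.card := by
  rintro v ⟨y, hy, c, hc, h1, h2, rfl⟩ i
  exact le_trans (disp_path_bound H hc i) (Nat.mul_le_mul_left _ h2)

theorem cycD_finite (H : WitnessGraph d A K) : (CycD H).Finite := by
  apply Set.Finite.subset (Set.finite_Icc
    (fun _ : Fin d => -((Anorm A * H.Q.card : ℕ) : ℤ))
    (fun _ => ((Anorm A * H.Q.card : ℕ) : ℤ)))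
  intro v hv
  rw [Set.mem_Icc]
  have hb := cycD_bound H v hv
  constructor <;> rw [Pi.le_def] <;> intro i <;> (have := hb i; omega)

end S16

open S16 S16GS More Wrap Rep


/-- let `a = ‖A‖∞`, `α` a word of actions, `s ≥ 1 + ‖Δ(α)‖∞` and
`x = (1+2a)·s`.  If `H` is a reversible witness graph with at most `x^(d^d)` states and
`p →^α_H q` is a path of `H`, then there is a path `p →^α̃_H q` with `Δ(α̃) = Δ(α)` and
`|α̃| ≤ 2·x^(7·d^(d+2))`. -/
theorem stmt16 {d : ℕ} (hd : 0 < d) (A : Finset (Fin d → ℤ)) (K : Finset (Fin d))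
    (H : WitnessGraph d A K) (hrev : Reversible H)
    (α : List (Fin d → ℤ)) (s : ℕ) (hs : 1 + znorm (disp α) ≤ s)
    (hcard : H.Q.card ≤ ((1 + 2 * Anorm A) * s) ^ d ^ d)
    (p q : PConf d) (hp : p ∈ H.Q)
    (pα : List (Trans d)) (hpath : PathT H.T p pα q) (hlab : labels pα = α) :
    ∃ p' : List (Trans d), PathT H.T p p' q ∧ disp (labels p') = disp α ∧
      p'.length ≤ 2 * ((1 + 2 * Anorm A) * s) ^ (7 * d ^ (d + 2)) := by
  classical
  have hs1 : 1 ≤ s := by omega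
  have hQc1 : 1 ≤ H.Q.card := Finset.card_pos.mpr H.nonempty
  obtain ⟨π₀, hπ₀, hπ₀len⟩ := S16.short_path H pα.length (le_refl _) hp hpath
  by_cases ha0 : Anorm A = 0
  · -- degenerate case: all displacements vanish
    have hzero : ∀ {u v : PConf d} {σ : List (Trans d)},
        PathT H.T u σ v → disp (labels σ) = 0 := by
      intro u v σ hσ
      funext i
      have h1 := S16.disp_path_bound H hσ i
      rw [ha0] at h1
      simp only [Nat.zero_mul, Nat.le_zero] at h1
      simp only [Pi.zero_apply]
      omega
    refine ⟨π₀, hπ₀, ?_, ?_⟩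
    · rw [hzero hπ₀, ← hlab, hzero hpath]
    · have hx1 : 1 ≤ (1 + 2 * Anorm A) * s := by
        rw [ha0]
        simpa using hs1
      have hexp : d ^ d ≤ 7 * d ^ (d + 2) := by
        have h1 : d ^ d ≤ d ^ (d + 2) := Nat.pow_le_pow_right (by omega) (by omega)
        have h2 : d ^ (d+2) ≤ 7 * d ^ (d+2) := Nat.le_mul_of_pos_left _ (by norm_num)
        omega
      calc π₀.length ≤ H.Q.card := le_of_lt hπ₀len
        _ ≤ ((1 + 2 * Anorm A) * s) ^ d ^ d := hcard
        _ ≤ ((1 + 2 * Anorm A) * s) ^ (7 * d ^ (d + 2)) :=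
            Nat.pow_le_pow_right hx1 hexp
        _ ≤ 2 * ((1 + 2 * Anorm A) * s) ^ (7 * d ^ (d + 2)) :=
            Nat.le_mul_of_pos_left _ (by norm_num)
  · have ha1 : 1 ≤ Anorm A := Nat.pos_of_ne_zero ha0
    -- reverse of the short path π₀
    obtain ⟨r₀, hr₀, hr₀d⟩ := hrev p hp q π₀ hπ₀
    -- the finite set of short-cycle displacements
    set Vfin := (S16.cycD_finite H).toFinset with hVfin
    have hVmem : ∀ v, v ∈ Vfin ↔ v ∈ CycD H := fun v => Set.Finite.mem_toFinset _
    have hVcard : Vfin.card ≤ (2 * (Anorm A * H.Q.card) + 1) ^ d := by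
      have hsub : Vfin ⊆ Finset.Icc (fun _ : Fin d => -((Anorm A * H.Q.card : ℕ) : ℤ))
          (fun _ => ((Anorm A * H.Q.card : ℕ) : ℤ)) := by
        intro v hv
        rw [Finset.mem_Icc]
        have hb := S16.cycD_bound H v ((hVmem v).mp hv)
        constructor <;> rw [Pi.le_def] <;> intro i <;> (have := hb i; omega)
      calc Vfin.card ≤ _ := Finset.card_le_card hsub
        _ = (2 * (Anorm A * H.Q.card) + 1) ^ d := by
            rw [Pi.card_Icc]
            have h1 : ∀ i : Fin d, (Finset.Icc (-((Anorm A * H.Q.card : ℕ) : ℤ))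
                ((Anorm A * H.Q.card : ℕ) : ℤ)).card = 2 * (Anorm A * H.Q.card) + 1 := by
              intro i
              rw [Int.card_Icc]
              omega
            rw [Finset.prod_congr rfl (fun i _ => h1 i), Finset.prod_const,
              Finset.card_univ, Fintype.card_fin]
    -- choose representative cycles for each displacement value
    have hselex : ∀ v ∈ Vfin, ∃ yc : PConf d × List (Trans d), yc.1 ∈ H.Q ∧
        PathT H.T yc.1 yc.2 yc.1 ∧ yc.2.length ≤ H.Q.card ∧ disp (labels yc.2) = v := by
      intro v hv
      obtain ⟨y, hy, c, hc, _, hlen, hdisp⟩ := (hVmem v).mp hv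
      exact ⟨(y, c), hy, hc, hlen, hdisp⟩
    choose! sel hsel1 hsel2 hsel3 hsel4 using hselex
    set tl := Vfin.toList.map (fun v => (v, sel v)) with htl
    have htlprop : ∀ e ∈ tl, e.2.1 ∈ H.Q ∧ PathT H.T e.2.1 e.2.2 e.2.1 ∧
        e.2.2.length ≤ H.Q.card ∧ disp (labels e.2.2) = e.1 := by
      intro e he
      rw [htl] at he
      obtain ⟨v, hvmem, rfl⟩ := List.mem_map.mp he
      have hv : v ∈ Vfin := Finset.mem_toList.mp hvmem
      exact ⟨hsel1 v hv, hsel2 v hv, hsel3 v hv, hsel4 v hv⟩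
    have htllen : tl.length = Vfin.card := by
      rw [htl, List.length_map, Finset.length_toList]
    obtain ⟨δ, hδ⟩ := S16.tour H hp tl htlprop
    -- the k = 0 tour realizes δ
    obtain ⟨c0, hc0, hc0d, hc0len⟩ := hδ (fun _ => 0)
    have hzip0 : (tl.map fun e => (0 : ℕ) • e.1).sum = (0 : Fin d → ℤ) := by
      have h1 : (tl.map fun e => (0 : ℕ) • e.1) = tl.map (fun _ => (0 : Fin d → ℤ)) := by
        simp
      rw [h1]
      induction tl with
      | nil => simp
      | cons e tl ih => simpa using ih
    rw [hzip0, add_zero] at hc0d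
    have hc0len' : c0.length ≤ 2 * tl.length * H.Q.card := by
      have h1 : (tl.map (fun _ => (0:ℕ))).sum = 0 := by
        induction tl with
        | nil => simp
        | cons e tl ih => simpa using ih
      rw [h1] at hc0len
      simpa using hc0len
    have hδnorm : ∀ i, (δ i).natAbs ≤ Anorm A * (2 * Vfin.card * H.Q.card) := by
      intro i
      rw [← hc0d]
      calc ((disp (labels c0)) i).natAbs ≤ Anorm A * c0.length :=
          S16.disp_path_bound H hc0 i
        _ ≤ Anorm A * (2 * Vfin.card * H.Q.card) := by
            apply Nat.mul_le_mul_left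
            rw [← htllen]
            exact hc0len'
    -- reverse of the base tour
    obtain ⟨r₁, hr₁, hr₁d⟩ := hrev p hp p c0 hc0
    -- cycle realizing b := disp α - disp π₀ - δ
    have hcbpath : PathT H.T p ((pα ++ r₀) ++ r₁) p :=
      pathT_append (pathT_append hpath hr₀) hr₁
    have hcbd : disp (labels ((pα ++ r₀) ++ r₁)) =
        disp α - disp (labels π₀) - δ := by
      simp only [labels_append, disp_append]
      rw [hlab]
      have h1 : disp (labels r₀) = - disp (labels π₀) :=
        eq_neg_of_add_eq_zero_right hr₀d
      have h2 : disp (labels r₁) = - δ := by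
        rw [← hc0d]
        exact eq_neg_of_add_eq_zero_right hr₁d
      rw [h1, h2]
      abel
    obtain ⟨rep, hrepV, hrepsum⟩ :=
      S16.decomp H ((pα ++ r₀) ++ r₁).length (le_refl _) hp hcbpath
    -- small representation
    have hM1 : 1 ≤ Anorm A * H.Q.card := Nat.mul_pos ha1 hQc1
    have hbR : ∀ i, ((disp α - disp (labels π₀) - δ) i).natAbs ≤
        ((s - 1) + Anorm A * H.Q.card + Anorm A * (2 * Vfin.card * H.Q.card)) := by
      intro i
      have h1 : ((disp α) i).natAbs ≤ s - 1 := by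
        have h2 := S16.natAbs_le_znorm (disp α) i
        omega
      have h2 : ((disp (labels π₀)) i).natAbs ≤ Anorm A * H.Q.card :=
        le_trans (S16.disp_path_bound H hπ₀ i)
          (Nat.mul_le_mul_left _ (le_of_lt hπ₀len))
      have h3 := hδnorm i
      simp only [Pi.sub_apply]
      omega
    obtain ⟨ws, hwsV, hwsum, hwslen⟩ := Rep.small_rep hd (CycD H)
      (Anorm A * H.Q.card)
      ((s - 1) + Anorm A * H.Q.card + Anorm A * (2 * Vfin.card * H.Q.card)) hM1
      (fun w hw i => S16.cycD_bound H w hw i) _ hbR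
      ⟨rep, hrepV, by rw [hrepsum, hcbd]⟩
    -- counts as multiplicities
    have hwssub : ws.toFinset ⊆ Vfin := by
      intro v hv
      exact (hVmem v).mpr (hwsV v (List.mem_toFinset.mp hv))
    obtain ⟨cfin, hcfin, hcfind, hcfinlen⟩ := hδ (fun e => ws.count e.1)
    have htlmap1 : (tl.map fun e => (ws.count e.1) • e.1) =
        Vfin.toList.map (fun v => (ws.count v) • v) := by
      rw [htl, List.map_map]
      rfl
    have hcount_sum : (Vfin.toList.map (fun v => (ws.count v) • v)).sum = ws.sum := by
      rw [Finset.sum_map_toList Vfin (fun v => (ws.count v) • v)]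
      exact (Finset.sum_list_count_of_subset ws Vfin hwssub).symm
    have htlmap2 : (tl.map fun e => ws.count e.1) =
        Vfin.toList.map (fun v => ws.count v) := by
      rw [htl, List.map_map]
      rfl
    have hcount_len : (Vfin.toList.map (fun v => ws.count v)).sum = ws.length := by
      rw [Finset.sum_map_toList Vfin (fun v => ws.count v)]
      rw [← List.sum_toFinset_count_eq_length ws]
      exact (Finset.sum_subset hwssub (fun v _ hv =>
        List.count_eq_zero_of_not_mem (fun hmem => hv (List.mem_toFinset.mpr hmem)))).symm
    refine ⟨cfin ++ π₀, pathT_append hcfin hπ₀, ?_, ?_⟩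
    · rw [labels_append, disp_append, hcfind, htlmap1, hcount_sum, hwsum]
      abel
    · have hlen1 : (cfin ++ π₀).length ≤
          2 * Vfin.card * H.Q.card + ws.length * H.Q.card + H.Q.card := by
        rw [List.length_append]
        have h1 : cfin.length ≤ 2 * Vfin.card * H.Q.card + ws.length * H.Q.card := by
          have h2 := hcfinlen
          rw [htlmap2, hcount_len, htllen] at h2
          exact h2
        have h2 : π₀.length ≤ H.Q.card := le_of_lt hπ₀len
        omega
      calc (cfin ++ π₀).length
          ≤ 2 * Vfin.card * H.Q.card + ws.length * H.Q.card + H.Q.card := hlen1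
        _ ≤ 2 * ((1 + 2 * Anorm A) * s) ^ (7 * d ^ (d + 2)) := by
            apply numeric16 d (Anorm A) s H.Q.card Vfin.card ws.length
              ((1 + 2 * Anorm A) * s) hd ha1 hs1 rfl hQc1 hcard hVcard
            exact hwslen
end

section
/- Let H = (Q,T) be a witness graph, let μ be a total Kirchhoff function for H whose displacement is the zero vector, and let p →^v_H p and q →^w_H q be cycles of H at states p and q. Then there exists a cycle q →^u_H q such that Δ(v)+Δ(u)+Δ(w) = 0 and |u| ≤ (1+|v|+|w|)·Σ_{t∈T} μ(t). -/
open VASRev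

namespace VASRev

variable {d : ℕ}

/-- Count of occurrences of a transition in a list. -/
def cnt : List (Trans d) → Trans d → ℕ
  | [], _ => 0
  | a :: l, t => (if t = a then 1 else 0) + cnt l t

lemma cnt_nil (t : Trans d) : cnt [] t = 0 := rfl

lemma cnt_cons (a : Trans d) (l : List (Trans d)) (t : Trans d) :
    cnt (a :: l) t = (if t = a then 1 else 0) + cnt l t := rfl

lemma cnt_append (p r : List (Trans d)) (t : Trans d) :
    cnt (p ++ r) t = cnt p t + cnt r t := by
  induction p with
  | nil => simp [cnt]
  | cons a l ih => simp only [List.cons_append, cnt_cons, ih]; omega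

lemma cnt_le_length (p : List (Trans d)) (t : Trans d) : cnt p t ≤ p.length := by
  induction p with
  | nil => simp [cnt]
  | cons a l ih => simp only [cnt_cons, List.length_cons]; split <;> omega

lemma cnt_eq_zero {p : List (Trans d)} {t : Trans d} (h : t ∉ p) : cnt p t = 0 := by
  induction p with
  | nil => rfl
  | cons a l ih =>
    simp only [List.mem_cons, not_or] at h
    simp only [cnt_cons, if_neg h.1, ih h.2]

lemma mem_of_cnt_pos {p : List (Trans d)} {t : Trans d} (h : 1 ≤ cnt p t) : t ∈ p := by
  by_contra hm
  rw [cnt_eq_zero hm] at h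
  omega

/-- Incoming weight at a state. -/
def inw (T : Finset (Trans d)) (ν : Trans d → ℕ) (z : PConf d) : ℕ :=
  ∑ t ∈ T.filter (fun t => t.2.2 = z), ν t

/-- Outgoing weight at a state. -/
def outw (T : Finset (Trans d)) (ν : Trans d → ℕ) (z : PConf d) : ℕ :=
  ∑ t ∈ T.filter (fun t => t.1 = z), ν t

lemma ite_swap (a b : PConf d) : (if a = b then (1:ℕ) else 0) = (if b = a then 1 else 0) := by
  by_cases h : a = b
  · simp [h]
  · simp [h, Ne.symm h]

lemma sum_split {ν ν' : Trans d → ℕ} {t₀ : Trans d}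
    (hν : ∀ t, ν t = ν' t + (if t = t₀ then 1 else 0)) (s : Finset (Trans d)) :
    ∑ t ∈ s, ν t = (∑ t ∈ s, ν' t) + (if t₀ ∈ s then 1 else 0) := by
  rw [Finset.sum_congr rfl (fun t _ => hν t), Finset.sum_add_distrib]
  congr 1
  exact Finset.sum_ite_eq' s t₀ (fun _ => 1)

lemma exists_pos_of_sum_pos {s : Finset (Trans d)} {f : Trans d → ℕ}
    (h : 0 < ∑ t ∈ s, f t) : ∃ t ∈ s, 0 < f t := by
  by_contra hc
  push_neg at hc
  simp only [Nat.le_zero] at hc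
  rw [Finset.sum_eq_zero hc] at h
  omega

lemma PathT.append {T : Finset (Trans d)} {x y z : PConf d} {p r : List (Trans d)}
    (h1 : PathT T x p y) (h2 : PathT T y r z) : PathT T x (p ++ r) z := by
  induction h1 with
  | nil => simpa using h2
  | cons ht hx hp ih => exact PathT.cons ht hx (ih h2)

lemma PathT.mem_T {T : Finset (Trans d)} {x y : PConf d} {p : List (Trans d)}
    (h : PathT T x p y) : ∀ t ∈ p, t ∈ T := by
  induction h with
  | nil => simp
  | cons ht hx hp ih =>
    intro t htm
    rcases List.mem_cons.1 htm with h | h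
    · exact h ▸ ht
    · exact ih t h

lemma PathT.nil_eq {T : Finset (Trans d)} {x y : PConf d} (h : PathT T x [] y) : x = y := by
  cases h; rfl

lemma mem_split {T : Finset (Trans d)} {x y : PConf d} {p : List (Trans d)} {t : Trans d}
    (h : PathT T x p y) (hm : t ∈ p) :
    ∃ p₁ p₂, p = p₁ ++ t :: p₂ ∧ PathT T x p₁ t.1 ∧ PathT T t.2.2 p₂ y := by
  induction h with
  | nil => simp at hm
  | @cons a c t' l ht hx hp ih =>
    rcases List.mem_cons.1 hm with h | h
    · subst h
      exact ⟨[], l, rfl, hx ▸ PathT.nil _, hp⟩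
    · obtain ⟨p₁, p₂, heq, h1, h2⟩ := ih h
      exact ⟨t' :: p₁, p₂, by rw [heq]; rfl, PathT.cons ht hx h1, h2⟩

/-- `Visits T a b p z` : the path `p` from `a` to `b` visits the state `z`. -/
def Visits (T : Finset (Trans d)) (a b : PConf d) (p : List (Trans d)) (z : PConf d) : Prop :=
  ∃ p₁ p₂, p = p₁ ++ p₂ ∧ PathT T a p₁ z ∧ PathT T z p₂ b

lemma visits_start {T : Finset (Trans d)} {a b : PConf d} {p : List (Trans d)}
    (h : PathT T a p b) : Visits T a b p a :=
  ⟨[], p, rfl, PathT.nil a, h⟩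

lemma visits_of_mem_fst {T : Finset (Trans d)} {a b : PConf d} {p : List (Trans d)} {t : Trans d}
    (h : PathT T a p b) (hm : t ∈ p) : Visits T a b p t.1 := by
  obtain ⟨p₁, p₂, heq, h1, h2⟩ := mem_split h hm
  exact ⟨p₁, t :: p₂, heq, h1, PathT.cons (h.mem_T t hm) rfl h2⟩

lemma visits_of_mem_snd {T : Finset (Trans d)} {a b : PConf d} {p : List (Trans d)} {t : Trans d}
    (h : PathT T a p b) (hm : t ∈ p) : Visits T a b p t.2.2 := by
  obtain ⟨p₁, p₂, heq, h1, h2⟩ := mem_split h hm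
  refine ⟨p₁ ++ [t], p₂, by simp [heq], ?_, h2⟩
  exact h1.append (PathT.cons (h.mem_T t hm) rfl (PathT.nil _))

/-- Kirchhoff-type flow identity for the count function of a path. -/
lemma path_flow {T : Finset (Trans d)} {x y : PConf d} {p : List (Trans d)}
    (h : PathT T x p y) (z : PConf d) :
    inw T (cnt p) z + (if z = x then 1 else 0) = outw T (cnt p) z + (if z = y then 1 else 0) := by
  induction h with
  | nil => simp [inw, outw, cnt_nil]
  | @cons a c t l ht hx hp ih =>
    have hsplit : ∀ t', cnt (t :: l) t' = cnt l t' + (if t' = t then 1 else 0) := by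
      intro t'; rw [cnt_cons]; omega
    have hin : inw T (cnt (t :: l)) z = inw T (cnt l) z + (if z = t.2.2 then 1 else 0) := by
      unfold inw
      rw [sum_split hsplit]
      congr 1
      simp only [Finset.mem_filter, ht, true_and]
      exact ite_swap _ _
    have hout : outw T (cnt (t :: l)) z = outw T (cnt l) z + (if z = a then 1 else 0) := by
      unfold outw
      rw [sum_split hsplit]
      congr 1
      simp only [Finset.mem_filter, ht, true_and, hx]
      exact ite_swap _ _
    have := ih
    rw [hin, hout]
    omega

/-- The walk lemma: a unit flow from `y` to `x` contains a path from `y` to `x`. -/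
lemma walk {T : Finset (Trans d)} (x : PConf d) :
    ∀ n (ν : Trans d → ℕ) (y : PConf d), (∑ t ∈ T, ν t) ≤ n →
    (∀ z, inw T ν z + (if z = y then 1 else 0) = outw T ν z + (if z = x then 1 else 0)) →
    ∃ p, PathT T y p x ∧ ∀ t, cnt p t ≤ ν t := by
  intro n
  induction n with
  | zero =>
    intro ν y hsum hflow
    by_cases hxy : y = x
    · exact ⟨[], hxy ▸ PathT.nil y, fun t => by simp [cnt]⟩
    · exfalso
      have h1 := hflow y
      rw [if_pos rfl, if_neg hxy] at h1
      have : 0 < outw T ν y := by omega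
      obtain ⟨t₀, ht₀, hpos⟩ := exists_pos_of_sum_pos this
      have ht₀T : t₀ ∈ T := (Finset.mem_filter.1 ht₀).1
      have : ν t₀ ≤ ∑ t ∈ T, ν t := Finset.single_le_sum (fun t _ => Nat.zero_le _) ht₀T
      omega
  | succ n ih =>
    intro ν y hsum hflow
    by_cases hxy : y = x
    · exact ⟨[], hxy ▸ PathT.nil y, fun t => by simp [cnt]⟩
    · have h1 := hflow y
      rw [if_pos rfl, if_neg hxy] at h1
      have hpos : 0 < outw T ν y := by omega
      obtain ⟨t₀, ht₀, ht₀pos⟩ := exists_pos_of_sum_pos hpos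
      rw [Finset.mem_filter] at ht₀
      obtain ⟨ht₀T, ht₀1⟩ := ht₀
      set ν' : Trans d → ℕ := fun t => ν t - (if t = t₀ then 1 else 0) with hν'def
      have hν : ∀ t, ν t = ν' t + (if t = t₀ then 1 else 0) := by
        intro t
        simp only [hν'def]
        by_cases h : t = t₀
        · subst h; simp; omega
        · simp [h]
      have hsum' : ∑ t ∈ T, ν' t ≤ n := by
        have := sum_split hν T
        rw [if_pos ht₀T] at this
        omega
      have hflow' : ∀ z, inw T ν' z + (if z = t₀.2.2 then 1 else 0) =
          outw T ν' z + (if z = x then 1 else 0) := by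
        intro z
        have hin : inw T ν z = inw T ν' z + (if z = t₀.2.2 then 1 else 0) := by
          unfold inw
          rw [sum_split hν]
          congr 1
          simp only [Finset.mem_filter, ht₀T, true_and]
          exact ite_swap _ _
        have hout : outw T ν z = outw T ν' z + (if z = y then 1 else 0) := by
          unfold outw
          rw [sum_split hν]
          congr 1
          simp only [Finset.mem_filter, ht₀T, true_and, ht₀1]
          exact ite_swap _ _
        have := hflow z
        rw [hin, hout] at this
        by_cases hzy : z = y <;> simp only [hzy, if_pos, if_neg] at this ⊢ <;> omega
      obtain ⟨p, hp, hcnt⟩ := ih ν' t₀.2.2 hsum' hflow'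
      refine ⟨t₀ :: p, PathT.cons ht₀T ht₀1 hp, fun t => ?_⟩
      rw [cnt_cons]
      have := hcnt t
      have := hν t
      omega

/-- Total count of a list of cycles. -/
def cntL : List (PConf d × List (Trans d)) → Trans d → ℕ
  | [], _ => 0
  | bc :: L, t => cnt bc.2 t + cntL L t

lemma cntL_append (L₁ L₂ : List (PConf d × List (Trans d))) (t : Trans d) :
    cntL (L₁ ++ L₂) t = cntL L₁ t + cntL L₂ t := by
  induction L₁ with
  | nil => simp [cntL]
  | cons bc L ih =>
    show cnt bc.2 t + cntL (L ++ L₂) t = (cnt bc.2 t + cntL L t) + cntL L₂ t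
    rw [ih]; omega

lemma cntL_pos {L : List (PConf d × List (Trans d))} {t : Trans d} (h : 1 ≤ cntL L t) :
    ∃ bc ∈ L, 1 ≤ cnt bc.2 t := by
  induction L with
  | nil => simp [cntL] at h
  | cons bc L ih =>
    simp only [cntL] at h
    by_cases h1 : 1 ≤ cnt bc.2 t
    · exact ⟨bc, List.mem_cons_self, h1⟩
    · obtain ⟨bc', hm, hc⟩ := ih (by omega)
      exact ⟨bc', List.mem_cons_of_mem _ hm, hc⟩

/-- Decomposition of a Kirchhoff flow into cycles. -/
lemma decomp {T : Finset (Trans d)} :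
    ∀ n (ν : Trans d → ℕ), (∑ t ∈ T, ν t) ≤ n → (∀ t ∉ T, ν t = 0) →
    (∀ z, inw T ν z = outw T ν z) →
    ∃ L : List (PConf d × List (Trans d)),
      (∀ bc ∈ L, PathT T bc.1 bc.2 bc.1) ∧ ∀ t, cntL L t = ν t := by
  intro n
  induction n with
  | zero =>
    intro ν hsum hsupp hk
    refine ⟨[], by simp, fun t => ?_⟩
    by_cases ht : t ∈ T
    · have h1 : ν t ≤ ∑ t ∈ T, ν t := Finset.single_le_sum (fun t _ => Nat.zero_le _) ht
      simp only [cntL]; omega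
    · simp only [cntL]; exact (hsupp t ht).symm
  | succ n ih =>
    intro ν hsum hsupp hk
    by_cases h0 : ∑ t ∈ T, ν t = 0
    · refine ⟨[], by simp, fun t => ?_⟩
      by_cases ht : t ∈ T
      · have h1 : ν t ≤ ∑ t ∈ T, ν t := Finset.single_le_sum (fun t _ => Nat.zero_le _) ht
        simp only [cntL]; omega
      · simp only [cntL]; exact (hsupp t ht).symm
    · obtain ⟨t₀, ht₀T, ht₀pos⟩ := exists_pos_of_sum_pos (Nat.pos_of_ne_zero h0)
      set ν' : Trans d → ℕ := fun t => ν t - (if t = t₀ then 1 else 0) with hν'def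
      have hν : ∀ t, ν t = ν' t + (if t = t₀ then 1 else 0) := by
        intro t
        simp only [hν'def]
        by_cases h : t = t₀
        · subst h; simp; omega
        · simp [h]
      have hflow' : ∀ z, inw T ν' z + (if z = t₀.2.2 then 1 else 0) =
          outw T ν' z + (if z = t₀.1 then 1 else 0) := by
        intro z
        have hin : inw T ν z = inw T ν' z + (if z = t₀.2.2 then 1 else 0) := by
          unfold inw
          rw [sum_split hν]
          congr 1
          simp only [Finset.mem_filter, ht₀T, true_and]
          exact ite_swap _ _
        have hout : outw T ν z = outw T ν' z + (if z = t₀.1 then 1 else 0) := by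
          unfold outw
          rw [sum_split hν]
          congr 1
          simp only [Finset.mem_filter, ht₀T, true_and]
          exact ite_swap _ _
        have := hk z
        rw [hin, hout] at this
        omega
      have hsum' : ∑ t ∈ T, ν' t ≤ n := by
        have := sum_split hν T
        rw [if_pos ht₀T] at this
        omega
      obtain ⟨pw, hpw, hcntw⟩ := walk t₀.1 n ν' t₀.2.2 hsum' hflow'
      set c : List (Trans d) := t₀ :: pw with hcdef
      have hcpath : PathT T t₀.1 c t₀.1 := PathT.cons ht₀T rfl hpw
      have hcnt_le : ∀ t, cnt c t ≤ ν t := by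
        intro t
        rw [hcdef, cnt_cons]
        have := hcntw t
        have := hν t
        omega
      set ν'' : Trans d → ℕ := fun t => ν t - cnt c t with hν''def
      have hν2 : ∀ t, ν t = ν'' t + cnt c t := by
        intro t
        simp only [hν''def]
        have := hcnt_le t
        omega
      have hsupp'' : ∀ t ∉ T, ν'' t = 0 := by
        intro t ht
        simp only [hν''def]
        rw [hsupp t ht]
        omega
      have hk'' : ∀ z, inw T ν'' z = outw T ν'' z := by
        intro z
        have hcflow := path_flow hcpath z
        have hin : inw T ν z = inw T ν'' z + inw T (cnt c) z := by
          unfold inw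
          rw [Finset.sum_congr rfl (fun t _ => hν2 t), Finset.sum_add_distrib]
        have hout : outw T ν z = outw T ν'' z + outw T (cnt c) z := by
          unfold outw
          rw [Finset.sum_congr rfl (fun t _ => hν2 t), Finset.sum_add_distrib]
        have := hk z
        rw [hin, hout] at this
        omega
      have hsum'' : ∑ t ∈ T, ν'' t ≤ n := by
        have heq : ∑ t ∈ T, ν t = (∑ t ∈ T, ν'' t) + ∑ t ∈ T, cnt c t := by
          rw [Finset.sum_congr rfl (fun t _ => hν2 t), Finset.sum_add_distrib]
        have hc1 : 1 ≤ cnt c t₀ := by rw [hcdef, cnt_cons]; simp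
        have : cnt c t₀ ≤ ∑ t ∈ T, cnt c t :=
          Finset.single_le_sum (fun t _ => Nat.zero_le _) ht₀T
        omega
      obtain ⟨L', hL'cyc, hL'cnt⟩ := ih ν'' hsum'' hsupp'' hk''
      refine ⟨(t₀.1, c) :: L', ?_, fun t => ?_⟩
      · intro bc hbc
        rcases List.mem_cons.1 hbc with h | h
        · subst h; exact hcpath
        · exact hL'cyc bc h
      · simp only [cntL, hL'cnt]
        have := hν2 t
        omega

lemma start_mem_Q {A : Finset (Fin d → ℤ)} {I : Finset (Fin d)} {H : WitnessGraph d A I}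
    {x y : PConf d} {p : List (Trans d)} (h : PathT H.T x p y) (hne : p ≠ []) : x ∈ H.Q := by
  cases h with
  | nil => exact absurd rfl hne
  | cons ht hx _ => exact hx ▸ (H.trans _ ht).1

/-- Finding a cycle in `L` that shares a state with `u`, walking along a path `P`. -/
lemma find {A : Finset (Fin d → ℤ)} {I : Finset (Fin d)} {H : WitnessGraph d A I}
    {q : PConf d} {u : List (Trans d)} {L : List (PConf d × List (Trans d))}
    (hu : PathT H.T q u q) (hcyc : ∀ bc ∈ L, PathT H.T bc.1 bc.2 bc.1)
    (hcov : ∀ t ∈ H.T, 1 ≤ cnt u t + cntL L t) :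
    ∀ (P : List (Trans d)) (x y : PConf d), PathT H.T x P y → Visits H.T q q u x →
    Visits H.T q q u y ∨
      ∃ bc ∈ L, ∃ z, Visits H.T q q u z ∧ Visits H.T bc.1 bc.1 bc.2 z := by
  intro P
  induction P with
  | nil =>
    intro x y h hvx
    exact Or.inl (h.nil_eq ▸ hvx)
  | cons t P' ih =>
    intro x y h hvx
    cases h with
    | cons ht hx hp =>
      by_cases htu : t ∈ u
      · exact ih t.2.2 y hp (visits_of_mem_snd hu htu)
      · have h0 : cnt u t = 0 := cnt_eq_zero htu
        have h1 := hcov t ht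
        have h2 : 1 ≤ cntL L t := by omega
        obtain ⟨bc, hbc, hbcnt⟩ := cntL_pos h2
        have hmem : t ∈ bc.2 := mem_of_cnt_pos hbcnt
        exact Or.inr ⟨bc, hbc, t.1, hx ▸ hvx, visits_of_mem_fst (hcyc bc hbc) hmem⟩

/-- Merging cycles into a single cycle at `q`. -/
lemma merge {A : Finset (Fin d → ℤ)} {I : Finset (Fin d)} {H : WitnessGraph d A I}
    {q : PConf d} (hq : q ∈ H.Q) :
    ∀ n (L : List (PConf d × List (Trans d))) (u : List (Trans d)), L.length ≤ n →
    PathT H.T q u q → (∀ bc ∈ L, PathT H.T bc.1 bc.2 bc.1) →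
    (∀ t ∈ H.T, 1 ≤ cnt u t + cntL L t) →
    ∃ u', PathT H.T q u' q ∧ ∀ t, cnt u' t = cnt u t + cntL L t := by
  intro n
  induction n with
  | zero =>
    intro L u hlen hu hcyc hcov
    have : L = [] := List.length_eq_zero_iff.1 (Nat.le_zero.1 hlen)
    subst this
    exact ⟨u, hu, fun t => by simp [cntL]⟩
  | succ n ih =>
    intro L u hlen hu hcyc hcov
    cases L with
    | nil => exact ⟨u, hu, fun t => by simp [cntL]⟩
    | cons bc L' =>
      by_cases hbce : bc.2 = []
      · have hc0 : ∀ t, cnt bc.2 t = 0 := by intro t; rw [hbce]; rfl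
        have hcov' : ∀ t ∈ H.T, 1 ≤ cnt u t + cntL L' t := by
          intro t ht
          have := hcov t ht
          simp only [cntL, hc0] at this
          omega
        obtain ⟨u', hu', hcnt'⟩ := ih L' u (by simpa using Nat.le_of_succ_le_succ hlen)
          hu (fun bc' h => hcyc bc' (List.mem_cons_of_mem _ h)) hcov'
        refine ⟨u', hu', fun t => ?_⟩
        simp only [cntL, hc0, hcnt']
        omega
      · have hbQ : bc.1 ∈ H.Q := start_mem_Q (hcyc bc (List.mem_cons_self)) hbce
        obtain ⟨P, hP⟩ := H.connected q hq bc.1 hbQ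
        have hfind := find hu hcyc hcov P q bc.1 hP (visits_start hu)
        have hshared : ∃ bc' ∈ bc :: L', ∃ z,
            Visits H.T q q u z ∧ Visits H.T bc'.1 bc'.1 bc'.2 z := by
          rcases hfind with h | h
          · exact ⟨bc, List.mem_cons_self, bc.1, h,
              visits_start (hcyc bc (List.mem_cons_self))⟩
          · exact h
        obtain ⟨bc', hbc', z, ⟨u₁, u₂, hueq, hu₁, hu₂⟩, ⟨c₁, c₂, hceq, hc₁, hc₂⟩⟩ := hshared
        obtain ⟨s, tl, hstl⟩ := List.append_of_mem hbc'
        set unew : List (Trans d) := u₁ ++ (c₂ ++ c₁ ++ u₂) with hunew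
        have hupath : PathT H.T q unew q :=
          hu₁.append ((hc₂.append hc₁).append hu₂)
        have hucnt : ∀ t, cnt unew t = cnt u t + cnt bc'.2 t := by
          intro t
          rw [hunew, hueq, hceq]
          simp only [cnt_append]
          omega
        have hlnew : (s ++ tl).length ≤ n := by
          have h3 := congrArg List.length hstl
          simp only [List.length_cons, List.length_append] at h3 hlen ⊢
          omega
        have hcntLsplit : ∀ t, cntL (bc :: L') t = cntL (s ++ tl) t + cnt bc'.2 t := by
          intro t
          rw [hstl, cntL_append, cntL_append]
          simp only [cntL]
          omega
        have hcyc' : ∀ bc'' ∈ s ++ tl, PathT H.T bc''.1 bc''.2 bc''.1 := by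
          intro bc'' h
          apply hcyc
          rw [hstl]
          rcases List.mem_append.1 h with h | h
          · exact List.mem_append.2 (Or.inl h)
          · exact List.mem_append.2 (Or.inr (List.mem_cons_of_mem _ h))
        have hcov' : ∀ t ∈ H.T, 1 ≤ cnt unew t + cntL (s ++ tl) t := by
          intro t ht
          have := hcov t ht
          rw [hucnt t]
          rw [hcntLsplit t] at this
          omega
        obtain ⟨u', hu', hcnt'⟩ := ih (s ++ tl) unew hlnew hupath hcyc' hcov'
        refine ⟨u', hu', fun t => ?_⟩
        rw [hcnt' t, hucnt t, hcntLsplit t]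
        omega

lemma length_eq_sum_cnt {T : Finset (Trans d)} {p : List (Trans d)}
    (h : ∀ t ∈ p, t ∈ T) : p.length = ∑ t ∈ T, cnt p t := by
  induction p with
  | nil => simp [cnt]
  | cons a l ih =>
    have haT : a ∈ T := h a (List.mem_cons_self)
    have hsplit : ∀ t, cnt (a :: l) t = cnt l t + (if t = a then 1 else 0) := by
      intro t; rw [cnt_cons]; omega
    rw [List.length_cons, ih (fun t ht => h t (List.mem_cons_of_mem _ ht)), sum_split hsplit,
      if_pos haT]

lemma disp_eq_sum_cnt {T : Finset (Trans d)} {p : List (Trans d)}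
    (h : ∀ t ∈ p, t ∈ T) (i : Fin d) :
    disp (labels p) i = ∑ t ∈ T, (cnt p t : ℤ) * t.2.1 i := by
  induction p with
  | nil => simp [disp, labels, cnt]
  | cons a l ih =>
    have haT : a ∈ T := h a (List.mem_cons_self)
    have hstep : disp (labels (a :: l)) i = a.2.1 i + disp (labels l) i := by
      simp [disp, labels]
    rw [hstep, ih (fun t ht => h t (List.mem_cons_of_mem _ ht))]
    have : ∀ t : Trans d, (cnt (a :: l) t : ℤ) * t.2.1 i =
        (cnt l t : ℤ) * t.2.1 i + (if t = a then t.2.1 i else 0) := by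
      intro t
      rw [cnt_cons]
      by_cases ht : t = a
      · subst ht; simp; push_cast; ring
      · simp [ht]
    rw [Finset.sum_congr rfl (fun t _ => this t), Finset.sum_add_distrib,
      Finset.sum_ite_eq' T a (fun t => t.2.1 i), if_pos haT]
    ring

end VASRev
/-- let `H = (Q,T)` be a witness graph, `μ` a total Kirchhoff function for
`H` of zero displacement, and `p →^v_H p`, `q →^w_H q` cycles of `H`.  Then there is a
cycle `q →^u_H q` with `Δ(v)+Δ(u)+Δ(w) = 0` and `|u| ≤ (1+|v|+|w|)·Σ_{t∈T} μ(t)`. -/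
theorem stmt17 {d : ℕ} (hd : 0 < d) {A : Finset (Fin d → ℤ)} {I : Finset (Fin d)}
    (H : WitnessGraph d A I)
    (μ : Trans d → ℕ) (hμ : IsKirchhoff H μ) (htot : ∀ t ∈ H.T, 1 ≤ μ t)
    (hzero : dispK H μ = 0)
    (p q : PConf d) (hp : p ∈ H.Q) (hq : q ∈ H.Q)
    (v w : List (Trans d)) (hv : PathT H.T p v p) (hw : PathT H.T q w q) :
    ∃ u : List (Trans d), PathT H.T q u q ∧
      disp (labels v) + disp (labels u) + disp (labels w) = 0 ∧
      u.length ≤ (1 + v.length + w.length) * ∑ t ∈ H.T, μ t := by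
  classical
  set K : ℕ := 1 + v.length + w.length with hK
  have hvT : ∀ t ∈ v, t ∈ H.T := hv.mem_T
  have hwT : ∀ t ∈ w, t ∈ H.T := hw.mem_T
  set ν : Trans d → ℕ := fun t => if t ∈ H.T then K * μ t - cnt v t - cnt w t else 0 with hνdef
  have key : ∀ t ∈ H.T, ν t + cnt v t + cnt w t = K * μ t := by
    intro t ht
    have h1 : cnt v t ≤ v.length := cnt_le_length v t
    have h2 : cnt w t ≤ w.length := cnt_le_length w t
    have h3 : 1 ≤ μ t := htot t ht
    have h4 : K ≤ K * μ t := Nat.le_mul_of_pos_right _ h3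
    simp only [hνdef, if_pos ht]
    omega
  have hνsupp : ∀ t ∉ H.T, ν t = 0 := fun t ht => by simp [hνdef, ht]
  have hνpos : ∀ t ∈ H.T, 1 ≤ ν t := by
    intro t ht
    have h1 : cnt v t ≤ v.length := cnt_le_length v t
    have h2 : cnt w t ≤ w.length := cnt_le_length w t
    have h3 : 1 ≤ μ t := htot t ht
    have h4 : K ≤ K * μ t := Nat.le_mul_of_pos_right _ h3
    have := key t ht
    omega
  have hνle : ∀ t ∈ H.T, ν t ≤ K * μ t := fun t ht => by have := key t ht; omega
  have hsum3 : ∀ (s : Finset (VASRev.Trans d)), (∀ t ∈ s, t ∈ H.T) →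
      (∑ t ∈ s, ν t) + (∑ t ∈ s, cnt v t) + (∑ t ∈ s, cnt w t) = K * ∑ t ∈ s, μ t := by
    intro s hs
    rw [Finset.mul_sum, ← Finset.sum_add_distrib, ← Finset.sum_add_distrib]
    exact Finset.sum_congr rfl (fun t ht => key t (hs t ht))
  have hνK : ∀ z, inw H.T ν z = outw H.T ν z := by
    intro z
    have h1 := path_flow hv z
    have h2 := path_flow hw z
    have h3 : inw H.T μ z = outw H.T μ z := hμ.2 z
    have hin : inw H.T ν z + inw H.T (cnt v) z + inw H.T (cnt w) z = K * inw H.T μ z :=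
      hsum3 (H.T.filter (fun t => t.2.2 = z)) (fun t ht => (Finset.mem_filter.1 ht).1)
    have hout : outw H.T ν z + outw H.T (cnt v) z + outw H.T (cnt w) z = K * outw H.T μ z :=
      hsum3 (H.T.filter (fun t => t.1 = z)) (fun t ht => (Finset.mem_filter.1 ht).1)
    rw [h3] at hin
    omega
  obtain ⟨L, hLcyc, hLcnt⟩ := decomp (∑ t ∈ H.T, ν t) ν le_rfl hνsupp hνK
  have hcov : ∀ t ∈ H.T, 1 ≤ cnt ([] : List (VASRev.Trans d)) t + cntL L t := by
    intro t ht
    rw [cnt_nil, hLcnt t]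
    have := hνpos t ht
    omega
  obtain ⟨u, hu, hucnt⟩ := merge hq L.length L [] le_rfl (PathT.nil q) hLcyc hcov
  have hucnt' : ∀ t, cnt u t = ν t := by
    intro t
    rw [hucnt t, hLcnt t, cnt_nil]
    omega
  have huT : ∀ t ∈ u, t ∈ H.T := hu.mem_T
  refine ⟨u, hu, ?_, ?_⟩
  · funext i
    show disp (labels v) i + disp (labels u) i + disp (labels w) i = 0
    have hdv := disp_eq_sum_cnt hvT i
    have hdw := disp_eq_sum_cnt hwT i
    have hdu : disp (labels u) i = ∑ t ∈ H.T, (ν t : ℤ) * t.2.1 i := by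
      rw [disp_eq_sum_cnt huT i]
      exact Finset.sum_congr rfl (fun t _ => by rw [hucnt' t])
    have hz : ∑ t ∈ H.T, (μ t : ℤ) * t.2.1 i = 0 := congrFun hzero i
    rw [hdv, hdw, hdu, ← Finset.sum_add_distrib, ← Finset.sum_add_distrib]
    have hcongr : ∀ t ∈ H.T,
        (cnt v t : ℤ) * t.2.1 i + (ν t : ℤ) * t.2.1 i + (cnt w t : ℤ) * t.2.1 i
          = (K : ℤ) * ((μ t : ℤ) * t.2.1 i) := by
      intro t ht
      have h := key t ht
      have hk : (ν t : ℤ) + (cnt v t : ℤ) + (cnt w t : ℤ) = (K : ℤ) * (μ t : ℤ) := by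
        exact_mod_cast h
      linear_combination (t.2.1 i) * hk
    rw [Finset.sum_congr rfl hcongr, ← Finset.mul_sum, hz, mul_zero]
  · rw [length_eq_sum_cnt huT]
    calc ∑ t ∈ H.T, cnt u t = ∑ t ∈ H.T, ν t :=
          Finset.sum_congr rfl (fun t _ => hucnt' t)
      _ ≤ ∑ t ∈ H.T, K * μ t := Finset.sum_le_sum (fun t ht => hνle t ht)
      _ = K * ∑ t ∈ H.T, μ t := (Finset.mul_sum _ _ _).symm
end
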